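/- arXiv:2302.01737 — 12 statements merged into one kernel-verified Lean document; each statement's English description precedes it below -/
import Mathlib

section
/- Theorem (ALSO-X# is better than ALSO-X under the type-∞ Wasserstein ambiguity set). Assume that for every t ∈ ℝ with inf_{x∈F_t} H(x) > 0, the problem min_{x∈F_t} H(x) has at most one minimizer. Then for every t ∈ ℝ the following holds: if there exists a minimizer x̄ of H over F_t that is feasible, then for every minimizer (x̂, β̂) of C over F_t × (−∞, 0], the point x̂ is feasible. (Hence the ALSO-X# bilevel scheme certifies feasibility at every objective level at which ALSO-X does, so its output value is at most that of ALSO-X.) -/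
/-!
For `β ≤ 0` one has `(f - β)₊ ≥ f₊ - β · 1{f > 0}`, so at an infeasible `x`, where
`P{f > 0} > ε`, the CVaR loss dominates the hinge loss: `C x β ≥ H x`. If a CVaR minimizer
`(x̂, β̂)` had `x̂` infeasible, then `H x̂ ≤ C x̂ β̂ ≤ C x̄ 0 = H x̄`, so `x̂` would minimize `H`
over `F t` as well. When the optimal value is `0`, `f x̂ ≤ 0` almost surely and `x̂` is feasible
after all; when it is positive, uniqueness forces `x̂ = x̄`, which is feasible.
-/

open MeasureTheory

lemma abs_iSup_le_sum_abs {ι : Type*} [Fintype ι] (g : ι → ℝ) : |⨆ i, g i| ≤ ∑ i, |g i| := by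
  rcases isEmpty_or_nonempty ι with hι | hι
  · simp [Real.iSup_of_isEmpty]
  obtain ⟨i₀⟩ := id hι
  have hle : ∀ i, |g i| ≤ ∑ j, |g j| := fun i =>
    Finset.single_le_sum (f := fun j => |g j|) (fun j _ => abs_nonneg _) (Finset.mem_univ i)
  rw [abs_le]
  constructor
  · have := le_ciSup (Finite.bddAbove_range g) i₀
    linarith [neg_abs_le (g i₀), hle i₀]
  · exact ciSup_le fun i => (le_abs_self _).trans (hle i)

section

variable {α : Type*} [MeasurableSpace α] {μ : Measure α}

lemma integrable_iSup {ι : Type*} [Fintype ι] {g : ι → α → ℝ} (hg : ∀ i, Integrable (g i) μ) :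
    Integrable (fun z => ⨆ i, g i z) μ :=
  (integrable_finsetSum Finset.univ fun i _ => (hg i).abs).mono'
    (AEMeasurable.iSup fun i => (hg i).aemeasurable).aestronglyMeasurable
    (.of_forall fun z => by simpa using abs_iSup_le_sum_abs fun i => g i z)

lemma integrable_of_integrable_iSup_abs {ι : Type*} [Finite ι] {g : ι → α → ℝ}
    (hg : ∀ i, AEStronglyMeasurable (g i) μ) (hsup : Integrable (fun z => ⨆ i, |g i z|) μ)
    (i : ι) : Integrable (g i) μ :=
  hsup.mono' (hg i) (.of_forall fun z => le_ciSup (Finite.bddAbove_range fun j => |g j z|) i)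

variable {g : α → ℝ}

lemma integral_max_zero_le_cvar [IsFiniteMeasure μ] (hgm : Measurable g) (hg : Integrable g μ)
    {ε β : ℝ} (hβ : β ≤ 0) (hε : ε ≤ μ.real {z | 0 < g z}) :
    ∫ z, max (g z) 0 ∂μ ≤ ε * β + ∫ z, max (g z - β) 0 ∂μ := by
  set s := {z | 0 < g z}
  have hs : MeasurableSet s := measurableSet_lt measurable_const hgm
  have hind : Integrable (s.indicator fun _ => -β) μ := (integrable_const _).indicator hs
  have hpt : ∀ z, max (g z) 0 + s.indicator (fun _ => -β) z ≤ max (g z - β) 0 := by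
    intro z
    by_cases hz : z ∈ s
    · simp only [Set.indicator_of_mem hz]
      have : 0 < g z := hz
      rw [max_eq_left this.le, max_eq_left (by linarith)]
      linarith
    · simp only [Set.indicator_of_notMem hz, add_zero]
      exact max_le_max (by linarith) le_rfl
  have hmono : ∫ z, (max (g z) 0 + s.indicator (fun _ => -β) z) ∂μ ≤
      ∫ z, max (g z - β) 0 ∂μ :=
    integral_mono (hg.pos_part.add hind) (hg.sub (integrable_const β)).pos_part hpt
  rw [integral_add hg.pos_part hind, integral_indicator_const _ hs, smul_eq_mul] at hmono
  linarith [mul_le_mul_of_nonpos_right hε hβ]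

lemma probReal_pos_eq_one_sub [IsProbabilityMeasure μ] (hgm : Measurable g) :
    μ.real {z | 0 < g z} = 1 - μ.real {z | g z ≤ 0} := by
  simpa only [Set.compl_ofPred, not_le] using
    probReal_compl_eq_one_sub (μ := μ) (measurableSet_le hgm measurable_const)

lemma probReal_nonpos_eq_one_of_integral_max_zero_eq_zero [IsProbabilityMeasure μ]
    (hgm : Measurable g) (hg : Integrable g μ) (h : ∫ z, max (g z) 0 ∂μ = 0) :
    μ.real {z | g z ≤ 0} = 1 := by
  have hae : ∀ᵐ z ∂μ, g z ≤ 0 := by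
    filter_upwards [(integral_eq_zero_iff_of_nonneg (fun z => le_max_right (g z) 0)
      hg.pos_part).mp h] with z hz
    exact max_eq_right_iff.mp hz
  have hs : NullMeasurableSet {z | g z ≤ 0} μ :=
    (measurableSet_le hgm measurable_const).nullMeasurableSet
  rw [measureReal_def, (ae_iff_measure_eq hs).1 hae, measure_univ, ENNReal.toReal_one]

end

theorem alsoxSharp_better_than_alsox_general
    (n m I : ℕ)
    (ε : ℝ) (hε : ε ∈ Set.Ioo (0 : ℝ) 1)
    (θ : ℝ)
    -- `N` is a norm on ℝᵐ (playing the role of the dual norm)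
    (N : (Fin m → ℝ) → ℝ)
    -- affine maps `a i : ℝⁿ → ℝᵐ`, `b i : ℝⁿ → ℝ`
    (a : Fin I → ((Fin n → ℝ) →ᵃ[ℝ] (Fin m → ℝ)))
    (b : Fin I → ((Fin n → ℝ) →ᵃ[ℝ] ℝ))
    -- reference distribution
    (P : Measure (Fin m → ℝ)) [IsProbabilityMeasure P]
    (hint : ∀ x : Fin n → ℝ,
      Integrable (fun ζ => ⨆ i : Fin I, |∑ k, a i x k * ζ k|) P)
    -- `f x ζ = max_i (θ N(aᵢ(x)) + aᵢ(x)ᵀζ - bᵢ(x))`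
    (f : (Fin n → ℝ) → (Fin m → ℝ) → ℝ)
    (hf : ∀ x ζ, f x ζ = ⨆ i : Fin I, (θ * N (a i x) + ∑ k, a i x k * ζ k - b i x))
    -- feasibility for the distributionally robust chance constraint
    (feasible : (Fin n → ℝ) → Prop)
    (hfeas : ∀ x, feasible x ↔ 1 - ε ≤ (P {ζ | f x ζ ≤ 0}).toReal)
    (F : ℝ → Set (Fin n → ℝ))
    -- hinge loss (lower-level ALSO-X objective)
    (H : (Fin n → ℝ) → ℝ)
    (hH : ∀ x, H x = ∫ ζ, max (f x ζ) 0 ∂P)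
    -- CVaR loss (lower-level ALSO-X# objective)
    (C : (Fin n → ℝ) → ℝ → ℝ)
    (hC : ∀ x β, C x β = ε * β + ∫ ζ, max (f x ζ - β) 0 ∂P)
    -- uniqueness assumption: for every `t` with positive lower-level ALSO-X optimal value,
    -- the problem `min_{x ∈ F t} H x` has at most one minimizer
    (huniq : ∀ t : ℝ, 0 < sInf (H '' F t) →
      ∀ x₁ ∈ F t, ∀ x₂ ∈ F t, IsMinOn H (F t) x₁ → IsMinOn H (F t) x₂ → x₁ = x₂) :
    ∀ t : ℝ,
      (∃ xbar ∈ F t, IsMinOn H (F t) xbar ∧ feasible xbar) →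
      ∀ (xhat : Fin n → ℝ) (βhat : ℝ), (xhat, βhat) ∈ F t ×ˢ Set.Iic (0 : ℝ) →
        IsMinOn (fun q : (Fin n → ℝ) × ℝ => C q.1 q.2) (F t ×ˢ Set.Iic (0 : ℝ)) (xhat, βhat) →
        feasible xhat := by
  intro t ⟨xbar, hxbar, hxbar_min, hxbar_feas⟩ xhat βhat ⟨hxhat, hβhat⟩ hmin
  have hf_meas : ∀ x, Measurable (f x) := fun x => by
    rw [funext (hf x)]
    exact Measurable.iSup fun i => by fun_prop
  have hf_int : ∀ x, Integrable (f x) P := fun x => by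
    have hlin := integrable_of_integrable_iSup_abs (fun i => (by fun_prop :
      Measurable fun ζ : Fin m → ℝ => ∑ k, a i x k * ζ k).aestronglyMeasurable) (hint x)
    rw [funext (hf x)]
    exact integrable_iSup fun i => ((integrable_const _).add (hlin i)).sub (integrable_const _)
  have hH_nonneg : ∀ x, 0 ≤ H x := fun x => by
    rw [hH]; exact integral_nonneg fun ζ => le_max_right _ _
  by_contra hinfeas
  rw [hfeas, ← measureReal_def] at hinfeas
  have hle : H xhat ≤ H xbar := calc
    H xhat ≤ C xhat βhat := by
      rw [hH, hC]
      refine integral_max_zero_le_cvar (hf_meas xhat) (hf_int xhat) hβhat ?_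
      rw [probReal_pos_eq_one_sub (hf_meas xhat)]
      linarith
    _ ≤ C xbar 0 := isMinOn_iff.mp hmin (xbar, 0) ⟨hxbar, Set.self_mem_Iic⟩
    _ = H xbar := by simp [hH, hC]
  rcases (hH_nonneg xbar).eq_or_lt with hzero | hpos
  · have hH0 : ∫ ζ, max (f xhat ζ) 0 ∂P = 0 := by
      rw [← hH]; linarith [hH_nonneg xhat]
    rw [probReal_nonpos_eq_one_of_integral_max_zero_eq_zero (hf_meas xhat) (hf_int xhat) hH0]
      at hinfeas
    linarith [hε.1]
  · have hinf : sInf (H '' F t) = H xbar :=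
      (hxbar_min.isGLB hxbar).csInf_eq ⟨_, xbar, hxbar, rfl⟩
    have hxhat_min : IsMinOn H (F t) xhat := fun y hy => hle.trans (hxbar_min hy)
    obtain rfl : xhat = xbar := huniq t (hinf ▸ hpos) xhat hxhat xbar hxbar hxhat_min hxbar_min
    exact hinfeas ((hfeas xhat).1 hxbar_feas)

/-- **ALSO-X# is better than ALSO-X under the type-∞ Wasserstein ambiguity set.**
If the lower-level ALSO-X problem has at most one minimizer whenever its optimal value is
positive, then at every objective level `t` at which the lower-level ALSO-X problem produces a
feasible minimizer, every minimizer of the lower-level ALSO-X# (CVaR-loss) problem is feasible. -/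
theorem alsoxSharp_better_than_alsox
    (n m I : ℕ) (hn : 1 ≤ n) (hm : 1 ≤ m) (hI : 1 ≤ I)
    (c : Fin n → ℝ) (X : Set (Fin n → ℝ))
    (ε : ℝ) (hε : ε ∈ Set.Ioo (0 : ℝ) 1)
    (θ : ℝ) (hθ : 0 ≤ θ)
    -- `N` is a norm on ℝᵐ (playing the role of the dual norm)
    (N : (Fin m → ℝ) → ℝ)
    (hN_tri : ∀ v w, N (v + w) ≤ N v + N w)
    (hN_smul : ∀ (r : ℝ) (v), N (r • v) = |r| * N v)
    (hN_def : ∀ v, N v = 0 → v = 0)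
    -- affine maps `a i : ℝⁿ → ℝᵐ`, `b i : ℝⁿ → ℝ`
    (a : Fin I → ((Fin n → ℝ) →ᵃ[ℝ] (Fin m → ℝ)))
    (b : Fin I → ((Fin n → ℝ) →ᵃ[ℝ] ℝ))
    -- reference distribution
    (P : Measure (Fin m → ℝ)) [IsProbabilityMeasure P]
    (hint : ∀ x : Fin n → ℝ,
      Integrable (fun ζ => ⨆ i : Fin I, |∑ k, a i x k * ζ k|) P)
    -- `f x ζ = max_i (θ N(aᵢ(x)) + aᵢ(x)ᵀζ - bᵢ(x))`
    (f : (Fin n → ℝ) → (Fin m → ℝ) → ℝ)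
    (hf : ∀ x ζ, f x ζ = ⨆ i : Fin I, (θ * N (a i x) + ∑ k, a i x k * ζ k - b i x))
    -- feasibility for the distributionally robust chance constraint
    (feasible : (Fin n → ℝ) → Prop)
    (hfeas : ∀ x, feasible x ↔ 1 - ε ≤ (P {ζ | f x ζ ≤ 0}).toReal)
    -- `F t = {x ∈ X : cᵀx ≤ t}`
    (F : ℝ → Set (Fin n → ℝ))
    (hF : ∀ t, F t = {x ∈ X | ∑ k, c k * x k ≤ t})
    -- hinge loss (lower-level ALSO-X objective)
    (H : (Fin n → ℝ) → ℝ)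
    (hH : ∀ x, H x = ∫ ζ, max (f x ζ) 0 ∂P)
    -- CVaR loss (lower-level ALSO-X# objective)
    (C : (Fin n → ℝ) → ℝ → ℝ)
    (hC : ∀ x β, C x β = ε * β + ∫ ζ, max (f x ζ - β) 0 ∂P)
    -- uniqueness assumption: for every `t` with positive lower-level ALSO-X optimal value,
    -- the problem `min_{x ∈ F t} H x` has at most one minimizer
    (huniq : ∀ t : ℝ, 0 < sInf (H '' F t) →
      ∀ x₁ ∈ F t, ∀ x₂ ∈ F t, IsMinOn H (F t) x₁ → IsMinOn H (F t) x₂ → x₁ = x₂) :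
    ∀ t : ℝ,
      (∃ xbar ∈ F t, IsMinOn H (F t) xbar ∧ feasible xbar) →
      ∀ (xhat : Fin n → ℝ) (βhat : ℝ), (xhat, βhat) ∈ F t ×ˢ Set.Iic (0 : ℝ) →
        IsMinOn (fun q : (Fin n → ℝ) × ℝ => C q.1 q.2) (F t ×ˢ Set.Iic (0 : ℝ)) (xhat, βhat) →
        feasible xhat :=
  alsoxSharp_better_than_alsox_general n m I ε hε θ N a b P hint f hf feasible hfeas F H hH C hC
    huniq
end

section
/- Theorem (ALSO-X# is better than its weak variant ALSO-X#-underline). For every t ∈ ℝ the following holds: if there exists a minimizer (x̄, β̄) of C over F_t × ℝ (i.e., with β unconstrained) such that x̄ is feasible, then for every minimizer (x̂, β̂) of C over F_t × (−∞, 0], the point x̂ is feasible. -/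
/-! Write `φ x β = ε β + E (f x ζ - β)₊`. Comparing the slopes of `β ↦ ε β` and of the hinge
term, a global minimiser `β` of `φ x` has `P (f x ζ > β) ≤ ε`; conversely, if `P (f x ζ > 0) ≤ ε`
then replacing `β` by `min β 0` does not increase `φ x β`. Hence, with `x̄` feasible,
`C x̂ β̂ ≤ C x̄ (min β̄ 0) ≤ C x̄ β̄ ≤ C x̂ β` for every `β`, so `β̂ ≤ 0` minimises `φ x̂` globally
and `P (f x̂ ζ > 0) ≤ P (f x̂ ζ > β̂) ≤ ε`. -/

open MeasureTheory Filter Topology Set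

/-- The Rockafellar–Uryasev objective: its infimum over `β` is `ε * CVaR_{1-ε}(g)`. -/
noncomputable def cvarLoss {Ω : Type*} [MeasurableSpace Ω] (μ : Measure Ω) (g : Ω → ℝ)
    (ε β : ℝ) : ℝ :=
  ε * β + ∫ ω, max (g ω - β) 0 ∂μ

theorem MeasureTheory.Integrable.iSup_of_finite {Ω ι : Type*} [MeasurableSpace Ω]
    {μ : Measure Ω} [Finite ι] {h : ι → Ω → ℝ} (hh : ∀ i, Integrable (h i) μ) :
    Integrable (fun ω => ⨆ i, h i ω) μ := by
  cases isEmpty_or_nonempty ι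
  · simp only [Real.iSup_of_isEmpty]
    exact integrable_zero Ω ℝ μ
  · have := Fintype.ofFinite ι
    have hsup : (fun ω => ⨆ i, h i ω) = Finset.univ.sup' Finset.univ_nonempty h := by
      ext ω
      rw [Finset.sup'_apply, Finset.sup'_univ_eq_ciSup]
    rw [hsup]
    exact Finset.sup'_induction (p := (Integrable · μ)) _ _ (fun _ h₁ _ h₂ => h₁.sup h₂)
      fun i _ => hh i

theorem integrable_of_integrable_iSup_abs_s1 {Ω ι : Type*} [MeasurableSpace Ω] {μ : Measure Ω}
    [Finite ι] {h : ι → Ω → ℝ} (hm : ∀ i, AEStronglyMeasurable (h i) μ)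
    (hsup : Integrable (fun ω => ⨆ i, |h i ω|) μ) (i : ι) : Integrable (h i) μ :=
  hsup.mono' (hm i) (ae_of_all _ fun ω => (Real.norm_eq_abs _).trans_le
    (le_ciSup (f := fun i => |h i ω|) (Set.finite_range _).bddAbove i))

theorem one_sub_le_measureReal_nonpos_iff {Ω : Type*} [MeasurableSpace Ω] {μ : Measure Ω}
    [IsProbabilityMeasure μ] {g : Ω → ℝ} {ε : ℝ} (hg : AEMeasurable g μ) :
    1 - ε ≤ μ.real {ω | g ω ≤ 0} ↔ μ.real {ω | 0 < g ω} ≤ ε := by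
  have hcompl : {ω | g ω ≤ 0} = {ω | 0 < g ω}ᶜ := by
    ext ω
    simp
  rw [hcompl, probReal_compl_eq_one_sub₀ (nullMeasurableSet_lt aemeasurable_const hg)]
  constructor <;> intro h <;> linarith

section CVaR

variable {Ω : Type*} [MeasurableSpace Ω] {μ : Measure Ω} [IsFiniteMeasure μ]
  {g : Ω → ℝ} {ε β β₀ : ℝ}

theorem integrable_max_sub_const (hg : Integrable g μ) (β : ℝ) :
    Integrable (fun ω => max (g ω - β) 0) μ :=
  (hg.sub (integrable_const β)).pos_part

theorem measureReal_lt_le_of_cvarLoss_le (hg : Integrable g μ) {s : ℝ} (hs : 0 < s)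
    (h : cvarLoss μ g ε β ≤ cvarLoss μ g ε (β + s)) :
    μ.real {ω | β + s < g ω} ≤ ε := by
  set d := fun ω => max (g ω - β) 0 - max (g ω - (β + s)) 0
  have hd_int : Integrable d μ :=
    (integrable_max_sub_const hg β).sub (integrable_max_sub_const hg (β + s))
  have hd_nonneg : 0 ≤ᵐ[μ] d := ae_of_all _ fun ω => by
    simp only [d, Pi.zero_apply, sub_nonneg]
    exact max_le_max (by linarith) le_rfl
  have hsub : {ω | β + s < g ω} ⊆ {ω | s ≤ d ω} := fun ω (hω : β + s < g ω) => by
    show s ≤ d ω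
    simp only [d]
    rw [max_eq_left (by linarith), max_eq_left (by linarith)]
    linarith
  have hmarkov := mul_meas_ge_le_integral_of_nonneg hd_nonneg hd_int s
  rw [integral_sub (integrable_max_sub_const hg β) (integrable_max_sub_const hg (β + s))]
    at hmarkov
  unfold cvarLoss at h
  have : μ.real {ω | β + s < g ω} * s ≤ ε * s := by
    nlinarith [measureReal_mono (μ := μ) hsub]
  exact le_of_mul_le_mul_right this hs

theorem cvarLoss_le_of_measureReal_lt_le (hg : Integrable g μ) (h : μ.real {ω | β₀ < g ω} ≤ ε)
    (hβ : β₀ ≤ β) : cvarLoss μ g ε β₀ ≤ cvarLoss μ g ε β := by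
  set S := {ω | β₀ < g ω}
  set d := fun ω => max (g ω - β₀) 0 - max (g ω - β) 0
  have hd_int : Integrable d μ :=
    (integrable_max_sub_const hg β₀).sub (integrable_max_sub_const hg β)
  have hd_zero : ∀ ω ∉ S, d ω = 0 := fun ω (hω : ¬β₀ < g ω) => by
    simp only [d]
    rw [max_eq_right (by linarith), max_eq_right (by linarith), sub_zero]
  have hd_le : ∀ ω, d ω ≤ β - β₀ := fun ω => by
    simp only [d]
    have := le_max_left (g ω - β) 0
    have := le_max_right (g ω - β) 0
    rw [sub_le_iff_le_add]
    exact max_le (by linarith) (by linarith)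
  have hint_d : ∫ ω, d ω ∂μ ≤ μ.real S * (β - β₀) := by
    rw [← setIntegral_eq_integral_of_forall_compl_eq_zero hd_zero, ← smul_eq_mul,
      ← setIntegral_const]
    exact integral_mono hd_int.integrableOn (integrable_const _) hd_le
  rw [integral_sub (integrable_max_sub_const hg β₀) (integrable_max_sub_const hg β)] at hint_d
  unfold cvarLoss
  nlinarith [mul_le_mul_of_nonneg_right h (sub_nonneg.mpr hβ)]

theorem cvarLoss_min_le (hg : Integrable g μ) (h : μ.real {ω | β₀ < g ω} ≤ ε) (β : ℝ) :
    cvarLoss μ g ε (min β β₀) ≤ cvarLoss μ g ε β := by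
  rcases le_total β β₀ with hle | hle
  · rw [min_eq_left hle]
  · rw [min_eq_right hle]
    exact cvarLoss_le_of_measureReal_lt_le hg h hle

theorem measureReal_lt_le_of_isMinOn_cvarLoss (hg : Integrable g μ)
    (hmin : IsMinOn (cvarLoss μ g ε) univ β) : μ.real {ω | β < g ω} ≤ ε := by
  set S : ℕ → Set Ω := fun n => {ω | β + 1 / (n + 1) < g ω}
  have hS_mono : Monotone S := fun n k hnk ω (hω : β + 1 / (n + 1) < g ω) => by
    show β + 1 / (k + 1) < g ω
    have : (1 : ℝ) / (k + 1) ≤ 1 / (n + 1) := by gcongr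
    linarith
  have hS_union : ⋃ n, S n = {ω | β < g ω} := by
    ext ω
    simp only [S, mem_iUnion, mem_ofPred_eq]
    constructor
    · rintro ⟨n, hn⟩
      have : (0 : ℝ) < 1 / (n + 1) := by positivity
      linarith
    · intro hω
      obtain ⟨n, hn⟩ := exists_nat_one_div_lt (sub_pos.mpr hω)
      exact ⟨n, by linarith⟩
  have hlim : Tendsto (fun n => μ.real (S n)) atTop (𝓝 (μ.real {ω | β < g ω})) := by
    rw [← hS_union]
    exact (ENNReal.tendsto_toReal (measure_ne_top μ _)).comp (tendsto_measure_iUnion_atTop hS_mono)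
  exact le_of_tendsto' hlim fun n =>
    measureReal_lt_le_of_cvarLoss_le hg (by positivity) (hmin (mem_univ _))

end CVaR

theorem alsoxSharp_better_than_weak_alsoxSharp_general
    (n m I : ℕ)
    (ε : ℝ)
    (θ : ℝ)
    -- `N` is a norm on ℝᵐ (playing the role of the dual norm)
    (N : (Fin m → ℝ) → ℝ)
    -- affine maps `a i : ℝⁿ → ℝᵐ`, `b i : ℝⁿ → ℝ`
    (a : Fin I → ((Fin n → ℝ) →ᵃ[ℝ] (Fin m → ℝ)))
    (b : Fin I → ((Fin n → ℝ) →ᵃ[ℝ] ℝ))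
    -- reference distribution
    (P : Measure (Fin m → ℝ)) [IsProbabilityMeasure P]
    (hint : ∀ x : Fin n → ℝ,
      Integrable (fun ζ => ⨆ i : Fin I, |∑ k, a i x k * ζ k|) P)
    -- `f x ζ = max_i (θ N(aᵢ(x)) + aᵢ(x)ᵀζ - bᵢ(x))`
    (f : (Fin n → ℝ) → (Fin m → ℝ) → ℝ)
    (hf : ∀ x ζ, f x ζ = ⨆ i : Fin I, (θ * N (a i x) + ∑ k, a i x k * ζ k - b i x))
    -- feasibility for the distributionally robust chance constraint
    (feasible : (Fin n → ℝ) → Prop)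
    (hfeas : ∀ x, feasible x ↔ 1 - ε ≤ (P {ζ | f x ζ ≤ 0}).toReal)
    -- `F t = {x ∈ X : cᵀx ≤ t}`
    (F : ℝ → Set (Fin n → ℝ))
    -- CVaR loss (lower-level ALSO-X# / ALSO-X#-underline objective)
    (C : (Fin n → ℝ) → ℝ → ℝ)
    (hC : ∀ x β, C x β = ε * β + ∫ ζ, max (f x ζ - β) 0 ∂P) :
    ∀ t : ℝ,
      (∃ xbar : Fin n → ℝ, ∃ βbar : ℝ, (xbar, βbar) ∈ F t ×ˢ (Set.univ : Set ℝ) ∧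
        IsMinOn (fun q : (Fin n → ℝ) × ℝ => C q.1 q.2) (F t ×ˢ (Set.univ : Set ℝ)) (xbar, βbar) ∧
        feasible xbar) →
      ∀ (xhat : Fin n → ℝ) (βhat : ℝ), (xhat, βhat) ∈ F t ×ˢ Set.Iic (0 : ℝ) →
        IsMinOn (fun q : (Fin n → ℝ) × ℝ => C q.1 q.2) (F t ×ˢ Set.Iic (0 : ℝ)) (xhat, βhat) →
        feasible xhat := by
  rintro t ⟨xbar, βbar, ⟨hxbar, -⟩, hbar_min, hbar_feas⟩ xhat βhat ⟨hxhat, hβhat⟩ hhat_min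
  have hC' : C = fun x => cvarLoss P (f x) ε := funext₂ hC
  subst hC'
  have hf_int : ∀ x, Integrable (f x) P := fun x => by
    have hlin := integrable_of_integrable_iSup_abs_s1 (μ := P) (h := fun i ζ => ∑ k, a i x k * ζ k)
      (fun i => (Finset.measurable_sum _ fun k _ =>
        (measurable_pi_apply k).const_mul _).aestronglyMeasurable) (hint x)
    rw [show f x = fun ζ => ⨆ i, (θ * N (a i x) + ∑ k, a i x k * ζ k - b i x) from funext (hf x)]
    exact Integrable.iSup_of_finite fun i => ((integrable_const _).add (hlin i)).sub
      (integrable_const _)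
  have hfeas' : ∀ x, feasible x ↔ P.real {ζ | 0 < f x ζ} ≤ ε := fun x =>
    (hfeas x).trans (one_sub_le_measureReal_nonpos_iff (hf_int x).aemeasurable)
  have hhat_glob : IsMinOn (cvarLoss P (f xhat) ε) univ βhat := fun β _ =>
    calc cvarLoss P (f xhat) ε βhat ≤ cvarLoss P (f xbar) ε (min βbar 0) :=
          isMinOn_iff.mp hhat_min (xbar, _) ⟨hxbar, mem_Iic.mpr (min_le_right _ _)⟩
      _ ≤ cvarLoss P (f xbar) ε βbar :=
          cvarLoss_min_le (hf_int xbar) ((hfeas' xbar).mp hbar_feas) βbar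
      _ ≤ cvarLoss P (f xhat) ε β := isMinOn_iff.mp hbar_min (xhat, β) ⟨hxhat, trivial⟩
  rw [hfeas']
  exact (measureReal_mono fun ζ (hζ : 0 < f xhat ζ) => hβhat.trans_lt hζ).trans
    (measureReal_lt_le_of_isMinOn_cvarLoss (hf_int xhat) hhat_glob)

/-- **ALSO-X# is better than its weak variant ALSO-X#-underline.**
If the lower-level ALSO-X#-underline problem (with `β` unconstrained) has a minimizer whose
`x`-component is feasible, then every minimizer of the lower-level ALSO-X# problem (with the
constraint `β ≤ 0`) has a feasible `x`-component. -/
theorem alsoxSharp_better_than_weak_alsoxSharp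
    (n m I : ℕ) (hn : 1 ≤ n) (hm : 1 ≤ m) (hI : 1 ≤ I)
    (c : Fin n → ℝ) (X : Set (Fin n → ℝ))
    (ε : ℝ) (hε : ε ∈ Set.Ioo (0 : ℝ) 1)
    (θ : ℝ) (hθ : 0 ≤ θ)
    -- `N` is a norm on ℝᵐ (playing the role of the dual norm)
    (N : (Fin m → ℝ) → ℝ)
    (hN_tri : ∀ v w, N (v + w) ≤ N v + N w)
    (hN_smul : ∀ (r : ℝ) (v), N (r • v) = |r| * N v)
    (hN_def : ∀ v, N v = 0 → v = 0)
    -- affine maps `a i : ℝⁿ → ℝᵐ`, `b i : ℝⁿ → ℝ`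
    (a : Fin I → ((Fin n → ℝ) →ᵃ[ℝ] (Fin m → ℝ)))
    (b : Fin I → ((Fin n → ℝ) →ᵃ[ℝ] ℝ))
    -- reference distribution
    (P : Measure (Fin m → ℝ)) [IsProbabilityMeasure P]
    (hint : ∀ x : Fin n → ℝ,
      Integrable (fun ζ => ⨆ i : Fin I, |∑ k, a i x k * ζ k|) P)
    -- `f x ζ = max_i (θ N(aᵢ(x)) + aᵢ(x)ᵀζ - bᵢ(x))`
    (f : (Fin n → ℝ) → (Fin m → ℝ) → ℝ)
    (hf : ∀ x ζ, f x ζ = ⨆ i : Fin I, (θ * N (a i x) + ∑ k, a i x k * ζ k - b i x))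
    -- feasibility for the distributionally robust chance constraint
    (feasible : (Fin n → ℝ) → Prop)
    (hfeas : ∀ x, feasible x ↔ 1 - ε ≤ (P {ζ | f x ζ ≤ 0}).toReal)
    -- `F t = {x ∈ X : cᵀx ≤ t}`
    (F : ℝ → Set (Fin n → ℝ))
    (hF : ∀ t, F t = {x ∈ X | ∑ k, c k * x k ≤ t})
    -- hinge loss (lower-level ALSO-X objective)
    (H : (Fin n → ℝ) → ℝ)
    (hH : ∀ x, H x = ∫ ζ, max (f x ζ) 0 ∂P)
    -- CVaR loss (lower-level ALSO-X# / ALSO-X#-underline objective)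
    (C : (Fin n → ℝ) → ℝ → ℝ)
    (hC : ∀ x β, C x β = ε * β + ∫ ζ, max (f x ζ - β) 0 ∂P) :
    ∀ t : ℝ,
      (∃ xbar : Fin n → ℝ, ∃ βbar : ℝ, (xbar, βbar) ∈ F t ×ˢ (Set.univ : Set ℝ) ∧
        IsMinOn (fun q : (Fin n → ℝ) × ℝ => C q.1 q.2) (F t ×ˢ (Set.univ : Set ℝ)) (xbar, βbar) ∧
        feasible xbar) →
      ∀ (xhat : Fin n → ℝ) (βhat : ℝ), (xhat, βhat) ∈ F t ×ˢ Set.Iic (0 : ℝ) →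
        IsMinOn (fun q : (Fin n → ℝ) × ℝ => C q.1 q.2) (F t ×ˢ Set.Iic (0 : ℝ)) (xhat, βhat) →
        feasible xhat :=
  alsoxSharp_better_than_weak_alsoxSharp_general n m I ε θ N a b P hint f hf feasible hfeas F C hC
end

section
/- Theorem (uniqueness for a single DRCCP with continuous reference distribution, p ∈ (1,∞)). For every t ∈ ℝ such that F_t ≠ ∅ and inf_{x∈F_t} F̂(x) > 0, the problem min_{x∈F_t} F̂(x) has at most one minimizer; i.e., the lower-level ALSO-X problem admits a unique optimal solution whenever its optimal value is positive. -/
/-!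
Let `x₁, x₂` be minimizers and `m` their midpoint. Convexity of `x ↦ θ‖x‖_p - b₁` makes the
integrand `(θ‖m‖_p + mᵀζ - b₁)₊` pointwise at most the average of the integrands at `x₁` and
`x₂`, while minimality forces the expectations to agree; as the integrands are continuous and `P`
charges every open set, the pointwise inequality is an equality everywhere. Equality in
`((u + v)/2)₊ ≤ (u₊ + v₊)/2` means `u v ≥ 0`, so the affine functions `ζ ↦ θ‖xᵢ‖_p + xᵢᵀζ - b₁`
never take strictly opposite signs; this forces them to be nonnegative multiples of each other,
and equal positive expectations make the multiple `1`, whence `x₁ = x₂`.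
-/

open MeasureTheory

theorem max_half_add_le (u v : ℝ) : max ((u + v) / 2) 0 ≤ (max u 0 + max v 0) / 2 :=
  max_le (by linarith [le_max_left u 0, le_max_left v 0]) (by positivity)

theorem mul_nonneg_of_max_add_max_le {u v : ℝ}
    (h : (max u 0 + max v 0) / 2 ≤ max ((u + v) / 2) 0) : 0 ≤ u * v := by
  rcases le_total 0 u with hu | hu <;> rcases le_total 0 v with hv | hv <;>
    rcases max_cases ((u + v) / 2) 0 with ⟨hm, _⟩ | ⟨hm, _⟩ <;>
    simp only [max_eq_left, max_eq_right, hu, hv, hm] at h <;> nlinarith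

theorem mul_eq_mul_of_forall_mul_nonneg {a b c d : ℝ}
    (h : ∀ s, 0 ≤ (a + s * c) * (b + s * d)) : a * d = b * c := by
  -- the discriminant of the nonnegative quadratic `s ↦ (a + s c)(b + s d)` is `(a d - b c)²`
  have hdisc := discrim_le_zero (a := c * d) (b := a * d + b * c) (c := a * b)
    fun s => by linarith [h s]
  rw [discrim] at hdisc
  nlinarith [sq_nonneg (a * d - b * c)]

theorem AffineMap.mul_eq_mul_of_forall_mul_nonneg {V P : Type*} [AddCommGroup V] [Module ℝ V]
    [AddTorsor V P] {φ ψ : P →ᵃ[ℝ] ℝ} (h : ∀ z, 0 ≤ φ z * ψ z) (z₀ z : P) :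
    φ z₀ * ψ z = ψ z₀ * φ z := by
  have key := _root_.mul_eq_mul_of_forall_mul_nonneg (a := φ z₀) (b := ψ z₀)
    (c := φ z - φ z₀) (d := ψ z - ψ z₀) fun s => by
      have := h (AffineMap.lineMap z₀ z s)
      simp only [AffineMap.apply_lineMap, AffineMap.lineMap_apply_ring'] at this
      linarith
  linear_combination key

theorem Continuous.eq_of_le_of_integral_le {α : Type*} [TopologicalSpace α] [MeasurableSpace α]
    {μ : Measure α} [μ.IsOpenPosMeasure] {f g : α → ℝ} (hf : Continuous f) (hg : Continuous g)
    (hfi : Integrable f μ) (hgi : Integrable g μ) (hle : f ≤ g)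
    (hint : ∫ z, g z ∂μ ≤ ∫ z, f z ∂μ) : f = g := by
  by_contra hne
  obtain ⟨z, hz⟩ := Function.ne_iff.mp hne
  have hpos := integral_pos_of_integrable_nonneg_nonzero (hg.sub hf) (hgi.sub hfi)
    (fun z => sub_nonneg.mpr (hle z)) (sub_ne_zero.mpr hz.symm)
  rw [integral_sub' hgi hfi] at hpos
  linarith

theorem MeasureTheory.Measure.isOpenPosMeasure_withDensity {α : Type*} [TopologicalSpace α] [MeasurableSpace α]
    {μ : Measure α} [μ.IsOpenPosMeasure] {ρ : α → ℝ} (hρ : Measurable ρ) (hρpos : ∀ z, 0 < ρ z) :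
    (μ.withDensity fun z => ENNReal.ofReal (ρ z)).IsOpenPosMeasure :=
  (withDensity_absolutelyContinuous' hρ.ennreal_ofReal.aemeasurable
    (ae_of_all _ fun z => (ENNReal.ofReal_pos.mpr (hρpos z)).ne')).isOpenPosMeasure

theorem convexOn_rpow_sum_abs_rpow {ι : Type*} [Fintype ι] {p : ℝ} (hp : 1 ≤ p) :
    ConvexOn ℝ Set.univ fun x : ι → ℝ => (∑ i, |x i| ^ p) ^ (1 / p) := by
  have : Fact (1 ≤ ENNReal.ofReal p) := ⟨by simpa using ENNReal.ofReal_le_ofReal hp⟩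
  have hp' : (ENNReal.ofReal p).toReal = p := ENNReal.toReal_ofReal (by linarith)
  have hnorm : ∀ x : ι → ℝ,
      (∑ i, |x i| ^ p) ^ (1 / p) = ‖WithLp.toLp (ENNReal.ofReal p) x‖ := fun x => by
    rw [PiLp.norm_eq_sum (by linarith), hp']
    rfl
  simp_rw [hnorm]
  exact (convexOn_norm convex_univ).comp_linearMap
    (WithLp.linearEquiv (ENNReal.ofReal p) ℝ (ι → ℝ)).symm.toLinearMap

section ExpectedPosPart

variable {ι : Type*} [Fintype ι]

noncomputable def expectedPosPart (g : (ι → ℝ) → ℝ) (P : Measure (ι → ℝ)) (x : ι → ℝ) : ℝ :=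
  ∫ ζ, max (g x + x ⬝ᵥ ζ) 0 ∂P

variable {P : Measure (ι → ℝ)}

theorem integrable_max_add_dotProduct [IsFiniteMeasure P] (hP : Integrable id P) (a : ℝ)
    (x : ι → ℝ) : Integrable (fun ζ => max (a + x ⬝ᵥ ζ) 0) P :=
  ((integrable_const a).add
    ((LinearMap.toContinuousLinearMap (dotProductBilin ℝ ℝ x)).integrable_comp hP)).pos_part

theorem mul_nonneg_of_isMinOn_expectedPosPart [IsFiniteMeasure P] [P.IsOpenPosMeasure]
    (hP : Integrable id P) {S : Set (ι → ℝ)} {g : (ι → ℝ) → ℝ} (hg : ConvexOn ℝ S g)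
    {x₁ x₂ : ι → ℝ} (hx₁ : x₁ ∈ S) (hx₂ : x₂ ∈ S)
    (h₁ : IsMinOn (expectedPosPart g P) S x₁) (h₂ : IsMinOn (expectedPosPart g P) S x₂) :
    ∀ ζ, 0 ≤ (g x₁ + x₁ ⬝ᵥ ζ) * (g x₂ + x₂ ⬝ᵥ ζ) := by
  set m := (1 / 2 : ℝ) • x₁ + (1 / 2 : ℝ) • x₂
  have hm : m ∈ S := hg.1 hx₁ hx₂ (by norm_num) (by norm_num) (by norm_num)
  have hgm : g m ≤ (g x₁ + g x₂) / 2 := by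
    have := hg.2 hx₁ hx₂ (by norm_num : (0 : ℝ) ≤ 1 / 2) (by norm_num : (0 : ℝ) ≤ 1 / 2)
      (by norm_num)
    simp only [smul_eq_mul] at this
    linarith
  have hmid : ∀ ζ, max (g m + m ⬝ᵥ ζ) 0
      ≤ max ((g x₁ + x₁ ⬝ᵥ ζ + (g x₂ + x₂ ⬝ᵥ ζ)) / 2) 0 := fun ζ => by
    refine max_le_max_right 0 ?_
    simp only [m, add_dotProduct, smul_dotProduct, smul_eq_mul]
    linarith
  have hconv : (fun ζ => max (g m + m ⬝ᵥ ζ) 0)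
      ≤ fun ζ => (max (g x₁ + x₁ ⬝ᵥ ζ) 0 + max (g x₂ + x₂ ⬝ᵥ ζ) 0) / 2 := fun ζ =>
    (hmid ζ).trans (max_half_add_le _ _)
  have hintegrable := integrable_max_add_dotProduct hP
  have heq := Continuous.eq_of_le_of_integral_le (by fun_prop) (by fun_prop) (hintegrable _ _)
    (((hintegrable _ _).add (hintegrable _ _)).div_const 2) hconv (by
      have hm₁ := isMinOn_iff.mp h₁ m hm
      have hm₂ := isMinOn_iff.mp h₂ m hm
      simp only [expectedPosPart] at hm₁ hm₂
      rw [integral_div, integral_add' (hintegrable _ _) (hintegrable _ _)]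
      linarith)
  exact fun ζ => mul_nonneg_of_max_add_max_le ((congrFun heq ζ).symm.le.trans (hmid ζ))

theorem eq_of_mul_nonneg_of_expectedPosPart_eq [IsProbabilityMeasure P] {g : (ι → ℝ) → ℝ}
    {x₁ x₂ : ι → ℝ} (h : ∀ ζ, 0 ≤ (g x₁ + x₁ ⬝ᵥ ζ) * (g x₂ + x₂ ⬝ᵥ ζ))
    (hpos : 0 < expectedPosPart g P x₁) (heq : expectedPosPart g P x₁ = expectedPosPart g P x₂) :
    x₁ = x₂ := by
  obtain ⟨ζ₀, hζ₀⟩ : ∃ ζ₀, 0 < g x₁ + x₁ ⬝ᵥ ζ₀ := by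
    by_contra! hneg
    simp [expectedPosPart, max_eq_right (hneg _)] at hpos
  let φ (x : ι → ℝ) : (ι → ℝ) →ᵃ[ℝ] ℝ :=
    AffineMap.const ℝ (ι → ℝ) (g x) + (dotProductBilin ℝ ℝ x).toAffineMap
  have hφ (x ζ : ι → ℝ) : φ x ζ = g x + x ⬝ᵥ ζ := rfl
  set μ := (g x₂ + x₂ ⬝ᵥ ζ₀) / (g x₁ + x₁ ⬝ᵥ ζ₀)
  have hμ : 0 ≤ μ := div_nonneg (nonneg_of_mul_nonneg_right (h ζ₀) hζ₀) hζ₀.le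
  have hprop (ζ : ι → ℝ) : g x₂ + x₂ ⬝ᵥ ζ = μ * (g x₁ + x₁ ⬝ᵥ ζ) := by
    have := AffineMap.mul_eq_mul_of_forall_mul_nonneg (φ := φ x₁) (ψ := φ x₂) h ζ₀ ζ
    simp only [hφ] at this
    rw [div_mul_eq_mul_div, eq_div_iff hζ₀.ne']
    linarith
  have hμ1 : μ = 1 := by
    have : expectedPosPart g P x₂ = μ * expectedPosPart g P x₁ := by
      simp only [expectedPosPart, hprop]
      rw [← integral_const_mul]
      congr with ζ
      rw [mul_max_of_nonneg _ _ hμ, mul_zero]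
    nlinarith
  refine dotProduct_eq _ _ fun ζ => ?_
  have h0 := hprop 0
  simp only [dotProduct_zero, add_zero, hμ1, one_mul] at h0
  have hζ := hprop ζ
  rw [hμ1, one_mul] at hζ
  linarith

theorem eq_of_isMinOn_expectedPosPart [IsProbabilityMeasure P] [P.IsOpenPosMeasure]
    (hP : Integrable id P) {S : Set (ι → ℝ)} {g : (ι → ℝ) → ℝ} (hg : ConvexOn ℝ S g)
    {x₁ x₂ : ι → ℝ} (hx₁ : x₁ ∈ S) (hx₂ : x₂ ∈ S)
    (h₁ : IsMinOn (expectedPosPart g P) S x₁) (h₂ : IsMinOn (expectedPosPart g P) S x₂)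
    (hpos : 0 < expectedPosPart g P x₁) : x₁ = x₂ :=
  eq_of_mul_nonneg_of_expectedPosPart_eq
    (mul_nonneg_of_isMinOn_expectedPosPart hP hg hx₁ hx₂ h₁ h₂) hpos
    (le_antisymm (isMinOn_iff.mp h₁ x₂ hx₂) (isMinOn_iff.mp h₂ x₁ hx₁))

end ExpectedPosPart

theorem single_drccp_lower_level_unique_pnorm_general
    (n : ℕ)
    (c : Fin n → ℝ) (b₁ : ℝ) (θ : ℝ) (hθ : 0 ≤ θ)
    (p : ℝ) (hp : 1 < p)
    (X : Set (Fin n → ℝ)) (hX : Convex ℝ X)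
    (P : Measure (Fin n → ℝ)) [IsProbabilityMeasure P]
    (hPint : Integrable (fun ζ : Fin n → ℝ => ‖ζ‖) P)
    -- `P` has a continuous, everywhere strictly positive density w.r.t. Lebesgue measure
    (ρ : (Fin n → ℝ) → ℝ) (hρc : Continuous ρ) (hρpos : ∀ z, 0 < ρ z)
    (hPd : P = volume.withDensity fun z => ENNReal.ofReal (ρ z))
    -- the lower-level ALSO-X objective `F̂(x) = E_P[(θ‖x‖_p + xᵀζ - b₁)₊]`
    (Fhat : (Fin n → ℝ) → ℝ)
    (hFhat : ∀ x, Fhat x =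
      ∫ ζ, max (θ * (∑ i, |x i| ^ p) ^ (1 / p) + ∑ i, x i * ζ i - b₁) 0 ∂P) :
    ∀ t : ℝ,
      ({x ∈ X | ∑ i, c i * x i ≤ t}).Nonempty →
      0 < sInf (Fhat '' {x ∈ X | ∑ i, c i * x i ≤ t}) →
      ∀ x₁ ∈ {x ∈ X | ∑ i, c i * x i ≤ t}, ∀ x₂ ∈ {x ∈ X | ∑ i, c i * x i ≤ t},
        IsMinOn Fhat {x ∈ X | ∑ i, c i * x i ≤ t} x₁ →
        IsMinOn Fhat {x ∈ X | ∑ i, c i * x i ≤ t} x₂ → x₁ = x₂ := by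
  intro t _ hinf x₁ hx₁ x₂ hx₂ h₁ h₂
  set S := {x ∈ X | ∑ i, c i * x i ≤ t}
  set g : (Fin n → ℝ) → ℝ := fun x => θ * (∑ i, |x i| ^ p) ^ (1 / p) - b₁
  have hF : Fhat = expectedPosPart g P := by
    funext x
    rw [hFhat, expectedPosPart]
    congr with ζ
    simp only [g, dotProduct]
    ring_nf
  have hS : Convex ℝ S := hX.inter (convex_halfSpace_le (dotProductBilin ℝ ℝ c).isLinear t)
  have hg : ConvexOn ℝ S g :=
    ((((convexOn_rpow_sum_abs_rpow hp.le).subset (Set.subset_univ S) hS).smul hθ).add_const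
      (-b₁)).congr fun x _ => by simp [g, sub_eq_add_neg]
  have : P.IsOpenPosMeasure := hPd ▸ Measure.isOpenPosMeasure_withDensity hρc.measurable hρpos
  have hpos : 0 < Fhat x₁ := hinf.trans_le <| csInf_le
    ⟨0, Set.forall_mem_image.mpr fun x _ => hF ▸ integral_nonneg fun ζ => le_max_right _ _⟩
    (Set.mem_image_of_mem Fhat hx₁)
  rw [hF] at h₁ h₂ hpos
  exact eq_of_isMinOn_expectedPosPart ((integrable_norm_iff aestronglyMeasurable_id).mp hPint)
    hg hx₁ hx₂ h₁ h₂ hpos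

/-- **Uniqueness for a single DRCCP with continuous reference distribution, `p ∈ (1,∞)`.**
For every level `t` at which the feasible region `F t = {x ∈ X : cᵀx ≤ t}` is nonempty and the
lower-level ALSO-X optimal value is positive, the lower-level ALSO-X problem
`min_{x ∈ F t} F̂(x)` has at most one minimizer. -/
theorem single_drccp_lower_level_unique_pnorm
    (n : ℕ) (hn : 1 ≤ n)
    (c : Fin n → ℝ) (b₁ : ℝ) (θ : ℝ) (hθ : 0 ≤ θ)
    (p : ℝ) (hp : 1 < p)
    (X : Set (Fin n → ℝ)) (hX : Convex ℝ X)
    (P : Measure (Fin n → ℝ)) [IsProbabilityMeasure P]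
    (hPint : Integrable (fun ζ : Fin n → ℝ => ‖ζ‖) P)
    -- `P` has a continuous, everywhere strictly positive density w.r.t. Lebesgue measure
    (ρ : (Fin n → ℝ) → ℝ) (hρc : Continuous ρ) (hρpos : ∀ z, 0 < ρ z)
    (hPd : P = volume.withDensity fun z => ENNReal.ofReal (ρ z))
    -- the lower-level ALSO-X objective `F̂(x) = E_P[(θ‖x‖_p + xᵀζ - b₁)₊]`
    (Fhat : (Fin n → ℝ) → ℝ)
    (hFhat : ∀ x, Fhat x =
      ∫ ζ, max (θ * (∑ i, |x i| ^ p) ^ (1 / p) + ∑ i, x i * ζ i - b₁) 0 ∂P) :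
    ∀ t : ℝ,
      ({x ∈ X | ∑ i, c i * x i ≤ t}).Nonempty →
      0 < sInf (Fhat '' {x ∈ X | ∑ i, c i * x i ≤ t}) →
      ∀ x₁ ∈ {x ∈ X | ∑ i, c i * x i ≤ t}, ∀ x₂ ∈ {x ∈ X | ∑ i, c i * x i ≤ t},
        IsMinOn Fhat {x ∈ X | ∑ i, c i * x i ≤ t} x₁ →
        IsMinOn Fhat {x ∈ X | ∑ i, c i * x i ≤ t} x₂ → x₁ = x₂ :=
  single_drccp_lower_level_unique_pnorm_general n c b₁ θ hθ p hp X hX P hPint ρ hρc hρpos hPd Fhat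
    hFhat
end

section
/- Lemma (uniqueness for a single DRCCP with continuous reference distribution, p ∈ {1,∞}). For every t ∈ ℝ such that F_t ≠ ∅ and inf_{x∈F_t} F̂(x) > 0, the problem min_{x∈F_t} F̂(x) has at most one minimizer; i.e., the lower-level ALSO-X problem admits a unique optimal solution whenever its optimal value is positive. -/
open MeasureTheory Matrix

section drccp_aux

private lemma drccp_dot_self_pos {n : ℕ} {x : Fin n → ℝ} (hx : x ≠ 0) : 0 < x ⬝ᵥ x := by
  have h0 : 0 ≤ x ⬝ᵥ x := Finset.sum_nonneg fun i _ => mul_self_nonneg _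
  rcases h0.lt_or_eq with h | h
  · exact h
  · exact absurd (dotProduct_self_eq_zero.mp h.symm) hx

private lemma drccp_dot_lb_zero {n : ℕ} {x : Fin n → ℝ} {α : ℝ}
    (h : ∀ ζ, -α ≤ x ⬝ᵥ ζ) : x = 0 := by
  by_contra hx
  have hS : 0 < x ⬝ᵥ x := drccp_dot_self_pos hx
  have := h ((-(α + 1) / (x ⬝ᵥ x)) • x)
  rw [dotProduct_smul, smul_eq_mul, div_mul_cancel₀ _ hS.ne'] at this
  linarith

private lemma drccp_proportional {n : ℕ} {x₁ x₂ : Fin n → ℝ} {α₁ α₂ : ℝ} (hx₁ : x₁ ≠ 0)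
    (H : ∀ ζ, -α₁ < x₁ ⬝ᵥ ζ → -α₂ ≤ x₂ ⬝ᵥ ζ) : ∃ c : ℝ, x₂ = c • x₁ := by
  have hS : 0 < x₁ ⬝ᵥ x₁ := drccp_dot_self_pos hx₁
  set c₀ := (x₁ ⬝ᵥ x₂) / (x₁ ⬝ᵥ x₁) with hc₀
  set d := x₂ - c₀ • x₁ with hd
  have h1 : x₁ ⬝ᵥ d = 0 := by
    rw [hd, dotProduct_sub, dotProduct_smul, smul_eq_mul, hc₀, div_mul_cancel₀ _ hS.ne', sub_self]
  have h2 : x₂ ⬝ᵥ d = d ⬝ᵥ d := by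
    have hx₂ : x₂ = d + c₀ • x₁ := by rw [hd]; abel
    rw [hx₂, add_dotProduct, smul_dotProduct, smul_eq_mul, h1, mul_zero, add_zero]
  by_cases hdz : d = 0
  · exact ⟨c₀, by rw [← sub_eq_zero, ← hd]; exact hdz⟩
  · exfalso
    have hSd : 0 < d ⬝ᵥ d := drccp_dot_self_pos hdz
    have hdot : ∀ (x : Fin n → ℝ) (r s : ℝ),
        x ⬝ᵥ (r • x₁ - s • d) = r * (x ⬝ᵥ x₁) - s * (x ⬝ᵥ d) := by
      intro x r s; simp [dotProduct_sub, dotProduct_smul]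
    obtain ⟨r, hr⟩ : ∃ r : ℝ, r = (|α₁| + 1) / (x₁ ⬝ᵥ x₁) := ⟨_, rfl⟩
    obtain ⟨s, hs⟩ : ∃ s : ℝ, s = (r * (x₂ ⬝ᵥ x₁) + α₂ + 1) / (d ⬝ᵥ d) := ⟨_, rfl⟩
    have hmain := H (r • x₁ - s • d) ?_
    · rw [hdot x₂ r s, h2] at hmain
      have hsd : s * (d ⬝ᵥ d) = r * (x₂ ⬝ᵥ x₁) + α₂ + 1 := by
        rw [hs, div_mul_cancel₀ _ hSd.ne']
      linarith
    · rw [hdot x₁ r s, h1, mul_zero, sub_zero, hr, div_mul_cancel₀ _ hS.ne']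
      have := neg_abs_le α₁
      linarith

private lemma drccp_sign {a b : ℝ} (h : max a 0 + max b 0 ≤ 2 * max ((a + b) / 2) 0) :
    (0 < a → 0 ≤ b) ∧ (0 < b → 0 ≤ a) := by
  constructor
  · intro ha
    by_contra hb
    push_neg at hb
    have e1 : max a 0 = a := max_eq_left ha.le
    have e2 : max b 0 = 0 := max_eq_right hb.le
    have e3 : max ((a + b) / 2) 0 < a / 2 := max_lt (by linarith) (by linarith)
    linarith
  · intro hb
    by_contra ha
    push_neg at ha
    have e1 : max b 0 = b := max_eq_left hb.le
    have e2 : max a 0 = 0 := max_eq_right ha.le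
    have e3 : max ((a + b) / 2) 0 < b / 2 := max_lt (by linarith) (by linarith)
    linarith

end drccp_aux

/-- **Uniqueness for a single DRCCP with continuous reference distribution, `p ∈ {1,∞}`.**
Here `Np` is the `ℓ₁`-norm (case `p = 1`) or the max-norm (case `p = ∞`) on ℝⁿ.  For every
level `t` at which the feasible region `F t = {x ∈ X : cᵀx ≤ t}` is nonempty and the lower-level
ALSO-X optimal value is positive, the lower-level ALSO-X problem `min_{x ∈ F t} F̂(x)` has at
most one minimizer. -/
theorem single_drccp_lower_level_unique_one_or_sup_norm
    (n : ℕ) (hn : 1 ≤ n)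
    (c : Fin n → ℝ) (b₁ : ℝ) (θ : ℝ) (hθ : 0 ≤ θ)
    -- the norm used is the `ℓ₁`-norm (`p = 1`) or the max-norm (`p = ∞`)
    (Np : (Fin n → ℝ) → ℝ)
    (hNp : (∀ x, Np x = ∑ i, |x i|) ∨ (∀ x, Np x = ⨆ i, |x i|))
    (X : Set (Fin n → ℝ)) (hX : Convex ℝ X)
    (P : Measure (Fin n → ℝ)) [IsProbabilityMeasure P]
    (hPint : Integrable (fun ζ : Fin n → ℝ => ‖ζ‖) P)
    -- `P` has a continuous, everywhere strictly positive density w.r.t. Lebesgue measure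
    (ρ : (Fin n → ℝ) → ℝ) (hρc : Continuous ρ) (hρpos : ∀ z, 0 < ρ z)
    (hPd : P = volume.withDensity fun z => ENNReal.ofReal (ρ z))
    -- the lower-level ALSO-X objective `F̂(x) = E_P[(θ‖x‖_p + xᵀζ - b₁)₊]`
    (Fhat : (Fin n → ℝ) → ℝ)
    (hFhat : ∀ x, Fhat x = ∫ ζ, max (θ * Np x + ∑ i, x i * ζ i - b₁) 0 ∂P) :
    ∀ t : ℝ,
      ({x ∈ X | ∑ i, c i * x i ≤ t}).Nonempty →
      0 < sInf (Fhat '' {x ∈ X | ∑ i, c i * x i ≤ t}) →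
      ∀ x₁ ∈ {x ∈ X | ∑ i, c i * x i ≤ t}, ∀ x₂ ∈ {x ∈ X | ∑ i, c i * x i ≤ t},
        IsMinOn Fhat {x ∈ X | ∑ i, c i * x i ≤ t} x₁ →
        IsMinOn Fhat {x ∈ X | ∑ i, c i * x i ≤ t} x₂ → x₁ = x₂ := by
  intro t _hne hpos x₁ hx₁ x₂ hx₂ hmin₁ hmin₂
  have hFinNe : Nonempty (Fin n) := ⟨⟨0, hn⟩⟩
  -- basic properties of the norm `Np`
  have hNadd : ∀ x y : Fin n → ℝ, Np (x + y) ≤ Np x + Np y := by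
    rcases hNp with hN | hN
    · intro x y
      simp only [hN]
      rw [← Finset.sum_add_distrib]
      exact Finset.sum_le_sum fun i _ => by simpa using abs_add_le (x i) (y i)
    · intro x y
      simp only [hN]
      refine ciSup_le fun i => ?_
      have bdd : ∀ z : Fin n → ℝ, BddAbove (Set.range fun j => |z j|) :=
        fun z => (Set.finite_range _).bddAbove
      calc |(x + y) i| ≤ |x i| + |y i| := by simpa using abs_add_le (x i) (y i)
        _ ≤ (⨆ j, |x j|) + ⨆ j, |y j| :=
            add_le_add (le_ciSup (bdd x) i) (le_ciSup (bdd y) i)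
  have hNsmul : ∀ (r : ℝ), 0 ≤ r → ∀ x : Fin n → ℝ, Np (r • x) = r * Np x := by
    rcases hNp with hN | hN
    · intro r hr x
      simp only [hN, Pi.smul_apply, smul_eq_mul, abs_mul, abs_of_nonneg hr, Finset.mul_sum]
    · intro r hr x
      calc Np (r • x) = ⨆ i, |r * x i| := by simp [hN]
        _ = ⨆ i, r * |x i| := by
            congr 1; funext i; rw [abs_mul, abs_of_nonneg hr]
        _ = r * ⨆ i, |x i| := (Real.mul_iSup_of_nonneg hr _).symm
        _ = r * Np x := by rw [hN]
  -- the integrand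
  obtain ⟨g, hgdef⟩ : ∃ g : (Fin n → ℝ) → (Fin n → ℝ) → ℝ,
      g = fun x ζ => θ * Np x + x ⬝ᵥ ζ - b₁ := ⟨_, rfl⟩
  have hgapp : ∀ x ζ, g x ζ = θ * Np x + x ⬝ᵥ ζ - b₁ := fun x ζ => by rw [hgdef]
  have hg : ∀ x, Fhat x = ∫ ζ, max (g x ζ) 0 ∂P := by
    intro x
    rw [hgdef]
    exact hFhat x
  have hgcont : ∀ x, Continuous (g x) := by
    intro x
    rw [hgdef]
    apply Continuous.sub _ continuous_const
    exact continuous_const.add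
      (continuous_finset_sum _ fun i _ => continuous_const.mul (continuous_apply i))
  -- integrability
  have hInt : ∀ x : Fin n → ℝ, Integrable (fun ζ => max (g x ζ) 0) P := by
    intro x
    refine Integrable.mono'
      ((integrable_const (|θ * Np x - b₁|)).add (hPint.const_mul (∑ i, |x i|)))
      (((hgcont x).max continuous_const).aestronglyMeasurable) ?_
    filter_upwards with ζ
    have h1 : |x ⬝ᵥ ζ| ≤ (∑ i, |x i|) * ‖ζ‖ := by
      calc |∑ i, x i * ζ i| ≤ ∑ i, |x i * ζ i| := Finset.abs_sum_le_sum_abs _ _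
        _ ≤ ∑ i, |x i| * ‖ζ‖ := Finset.sum_le_sum fun i _ => by
            rw [abs_mul]
            exact mul_le_mul_of_nonneg_left
              ((Real.norm_eq_abs (ζ i)) ▸ norm_le_pi_norm ζ i) (abs_nonneg _)
        _ = (∑ i, |x i|) * ‖ζ‖ := (Finset.sum_mul _ _ _).symm
    have h2 : ‖max (g x ζ) 0‖ ≤ |g x ζ| := by
      rw [Real.norm_eq_abs, abs_of_nonneg (le_max_right _ _)]
      exact max_le (le_abs_self _) (abs_nonneg _)
    have h3 : |g x ζ| ≤ |θ * Np x - b₁| + |x ⬝ᵥ ζ| := by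
      have : g x ζ = (θ * Np x - b₁) + x ⬝ᵥ ζ := by rw [hgapp]; ring
      rw [this]; exact abs_add_le _ _
    show ‖max (g x ζ) 0‖ ≤ |θ * Np x - b₁| + (∑ i, |x i|) * ‖ζ‖
    exact h2.trans (h3.trans (by linarith))
  -- values of the minimizers
  have hF_nonneg : ∀ x, 0 ≤ Fhat x := fun x =>
    (hg x) ▸ integral_nonneg fun ζ => le_max_right _ _
  have hbdd : BddBelow (Fhat '' {x ∈ X | ∑ i, c i * x i ≤ t}) := by
    refine ⟨0, fun y hy => ?_⟩
    obtain ⟨x, -, rfl⟩ := hy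
    exact hF_nonneg x
  have hv1 : 0 < Fhat x₁ :=
    lt_of_lt_of_le hpos (csInf_le hbdd (Set.mem_image_of_mem _ hx₁))
  have h12 : Fhat x₁ = Fhat x₂ :=
    le_antisymm (isMinOn_iff.mp hmin₁ x₂ hx₂) (isMinOn_iff.mp hmin₂ x₁ hx₁)
  have hv2 : 0 < Fhat x₂ := h12 ▸ hv1
  -- the midpoint
  obtain ⟨m, hm⟩ : ∃ m : Fin n → ℝ, m = (1/2 : ℝ) • x₁ + (1/2 : ℝ) • x₂ := ⟨_, rfl⟩
  have hmX : m ∈ X := by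
    rw [hm]
    exact hX hx₁.1 hx₂.1 (by norm_num) (by norm_num) (by norm_num)
  have hmc : ∑ i, c i * m i ≤ t := by
    have hsum : ∑ i, c i * m i = (∑ i, c i * x₁ i) / 2 + (∑ i, c i * x₂ i) / 2 := by
      rw [Finset.sum_div, Finset.sum_div, ← Finset.sum_add_distrib]
      refine Finset.sum_congr rfl fun i _ => ?_
      rw [hm]
      simp only [Pi.add_apply, Pi.smul_apply, smul_eq_mul]
      ring
    rw [hsum]
    linarith [hx₁.2, hx₂.2]
  have hmmem : m ∈ {x ∈ X | ∑ i, c i * x i ≤ t} := ⟨hmX, hmc⟩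
  have hNm : Np m ≤ Np x₁ / 2 + Np x₂ / 2 := by
    calc Np m = Np ((1/2 : ℝ) • x₁ + (1/2 : ℝ) • x₂) := by rw [hm]
      _ ≤ Np ((1/2 : ℝ) • x₁) + Np ((1/2 : ℝ) • x₂) := hNadd _ _
      _ = Np x₁ / 2 + Np x₂ / 2 := by
          rw [hNsmul _ (by norm_num) x₁, hNsmul _ (by norm_num) x₂]; ring
  -- pointwise convexity estimates
  have hptA : ∀ ζ, g m ζ ≤ (g x₁ ζ + g x₂ ζ) / 2 := by
    intro ζ
    have hdm : m ⬝ᵥ ζ = (x₁ ⬝ᵥ ζ + x₂ ⬝ᵥ ζ) / 2 := by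
      rw [hm, add_dotProduct, smul_dotProduct, smul_dotProduct, smul_eq_mul, smul_eq_mul]
      ring
    have hNmθ : θ * Np m ≤ θ * (Np x₁ / 2 + Np x₂ / 2) := mul_le_mul_of_nonneg_left hNm hθ
    rw [hgapp, hgapp, hgapp, hdm]
    linarith
  have hptB : ∀ ζ, max (g m ζ) 0 ≤ max (g x₁ ζ) 0 / 2 + max (g x₂ ζ) 0 / 2 := by
    intro ζ
    refine max_le ?_ (by positivity)
    calc g m ζ ≤ (g x₁ ζ + g x₂ ζ) / 2 := hptA ζ
      _ ≤ max (g x₁ ζ) 0 / 2 + max (g x₂ ζ) 0 / 2 := by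
          have h1 := le_max_left (g x₁ ζ) 0
          have h2 := le_max_left (g x₂ ζ) 0
          linarith
  -- convexity through the integral and optimality force a.e. equality
  have hI1 : Integrable (fun ζ => max (g x₁ ζ) 0 / 2) P := (hInt x₁).div_const 2
  have hI2 : Integrable (fun ζ => max (g x₂ ζ) 0 / 2) P := (hInt x₂).div_const 2
  have hI12 : Integrable (fun ζ => max (g x₁ ζ) 0 / 2 + max (g x₂ ζ) 0 / 2) P := hI1.add hI2
  have e1 : ∫ ζ, (max (g x₁ ζ) 0 / 2 + max (g x₂ ζ) 0 / 2) ∂P = Fhat x₁ / 2 + Fhat x₂ / 2 := by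
    rw [integral_add hI1 hI2, integral_div, integral_div, ← hg x₁, ← hg x₂]
  have hFm_le : Fhat m ≤ Fhat x₁ / 2 + Fhat x₂ / 2 := by
    rw [hg m, ← e1]
    exact integral_mono (hInt m) hI12 hptB
  have hFm_ge : Fhat x₁ ≤ Fhat m := isMinOn_iff.mp hmin₁ m hmmem
  obtain ⟨φ, hφdef⟩ : ∃ φ : (Fin n → ℝ) → ℝ,
      φ = fun ζ => max (g x₁ ζ) 0 / 2 + max (g x₂ ζ) 0 / 2 - max (g m ζ) 0 := ⟨_, rfl⟩
  have hφapp : ∀ ζ, φ ζ = max (g x₁ ζ) 0 / 2 + max (g x₂ ζ) 0 / 2 - max (g m ζ) 0 :=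
    fun ζ => by rw [hφdef]
  have hφ_nonneg : ∀ ζ, 0 ≤ φ ζ := fun ζ => by
    rw [hφapp]; exact sub_nonneg.mpr (hptB ζ)
  have hφ_int : Integrable φ P := by
    rw [hφdef]; exact hI12.sub (hInt m)
  have hφ_zero : ∫ ζ, φ ζ ∂P = 0 := by
    have heq : ∫ ζ, φ ζ ∂P = Fhat x₁ / 2 + Fhat x₂ / 2 - Fhat m := by
      rw [hφdef, integral_sub hI12 (hInt m), e1, ← hg m]
    refine le_antisymm ?_ (integral_nonneg hφ_nonneg)
    rw [heq]
    linarith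
  have hae : ∀ᵐ ζ ∂P, φ ζ = 0 :=
    (integral_eq_zero_iff_of_nonneg hφ_nonneg hφ_int).mp hφ_zero
  -- the bad sign set is `P`-null, hence Lebesgue-null, hence (being open) empty
  set S : Set (Fin n → ℝ) :=
    {ζ | 0 < g x₁ ζ ∧ g x₂ ζ < 0} ∪ {ζ | g x₁ ζ < 0 ∧ 0 < g x₂ ζ} with hSdef
  have haeS : ∀ᵐ ζ ∂P, ζ ∉ S := by
    filter_upwards [hae] with ζ hζ
    intro hS
    rw [hφapp] at hζ
    have key : max (g x₁ ζ) 0 + max (g x₂ ζ) 0 ≤ 2 * max ((g x₁ ζ + g x₂ ζ) / 2) 0 := by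
      have h1 : max (g m ζ) 0 ≤ max ((g x₁ ζ + g x₂ ζ) / 2) 0 :=
        max_le_max (hptA ζ) le_rfl
      linarith
    obtain ⟨k1, k2⟩ := drccp_sign key
    rcases hS with ⟨ha, hb⟩ | ⟨ha, hb⟩
    · exact absurd (k1 ha) (not_le.mpr hb)
    · exact absurd (k2 hb) (not_le.mpr ha)
  have hPS : P S = 0 := by
    have := ae_iff.mp haeS
    simpa [not_not] using this
  have hvolS : volume S = 0 := by
    have hmeas : Measurable fun z : Fin n → ℝ => ENNReal.ofReal (ρ z) :=
      ENNReal.measurable_ofReal.comp hρc.measurable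
    rw [hPd, withDensity_apply_eq_zero hmeas] at hPS
    have hsub : S ⊆ {z | ENNReal.ofReal (ρ z) ≠ 0} := fun z _ => by
      simp [ENNReal.ofReal_eq_zero, not_le, hρpos z]
    rwa [Set.inter_eq_self_of_subset_right hsub] at hPS
  have hSopen : IsOpen S := by
    have o1 : IsOpen {ζ | 0 < g x₁ ζ ∧ g x₂ ζ < 0} := by
      rw [Set.setOf_and]
      exact (isOpen_lt continuous_const (hgcont x₁)).inter
        (isOpen_lt (hgcont x₂) continuous_const)
    have o2 : IsOpen {ζ | g x₁ ζ < 0 ∧ 0 < g x₂ ζ} := by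
      rw [Set.setOf_and]
      exact (isOpen_lt (hgcont x₁) continuous_const).inter
        (isOpen_lt continuous_const (hgcont x₂))
    exact o1.union o2
  have hSempty : S = ∅ := by
    rcases Set.eq_empty_or_nonempty S with h | h
    · exact h
    · exact absurd hvolS (hSopen.measure_pos volume h).ne'
  have hnotS : ∀ ζ, ζ ∉ S := by
    intro ζ hζ
    rw [hSempty] at hζ
    exact hζ
  -- sign compatibility everywhere
  have H1 : ∀ ζ, 0 < g x₁ ζ → 0 ≤ g x₂ ζ := by
    intro ζ h
    by_contra hc
    push_neg at hc
    exact hnotS ζ (Or.inl ⟨h, hc⟩)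
  have H2 : ∀ ζ, 0 < g x₂ ζ → 0 ≤ g x₁ ζ := by
    intro ζ h
    by_contra hc
    push_neg at hc
    exact hnotS ζ (Or.inr ⟨hc, h⟩)
  -- existence of points where the integrands are positive
  have hex : ∀ x : Fin n → ℝ, 0 < Fhat x → ∃ ζ, 0 < g x ζ := by
    intro x hx
    by_contra hc
    push_neg at hc
    have hzero : (fun ζ => max (g x ζ) 0) = fun _ => (0 : ℝ) :=
      funext fun ζ => max_eq_right (hc ζ)
    rw [hg x, hzero, integral_zero] at hx
    exact lt_irrefl _ hx
  have hex₁ := hex x₁ hv1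
  have hex₂ := hex x₂ hv2
  -- rewrite via the affine constants
  have hgform : ∀ x ζ, g x ζ = x ⬝ᵥ ζ + (θ * Np x - b₁) := by
    intro x ζ; rw [hgapp]; ring
  by_cases hx1z : x₁ = 0
  · -- then `g x₁` is a positive constant, so `g x₂ ≥ 0` everywhere, forcing `x₂ = 0`
    have hconst : ∀ ζ, 0 < g x₁ ζ := by
      obtain ⟨ζ₀, hζ₀⟩ := hex₁
      intro ζ
      rw [hgform, hx1z, zero_dotProduct] at hζ₀ ⊢
      simpa using hζ₀
    have : ∀ ζ, -(θ * Np x₂ - b₁) ≤ x₂ ⬝ᵥ ζ := by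
      intro ζ
      have := H1 ζ (hconst ζ)
      rw [hgform] at this
      linarith
    rw [hx1z, drccp_dot_lb_zero this]
  by_cases hx2z : x₂ = 0
  · -- symmetric: `x₁ = 0`, contradicting the case assumption
    exfalso
    have hconst : ∀ ζ, 0 < g x₂ ζ := by
      obtain ⟨ζ₀, hζ₀⟩ := hex₂
      intro ζ
      rw [hgform, hx2z, zero_dotProduct] at hζ₀ ⊢
      simpa using hζ₀
    have : ∀ ζ, -(θ * Np x₁ - b₁) ≤ x₁ ⬝ᵥ ζ := by
      intro ζ
      have := H2 ζ (hconst ζ)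
      rw [hgform] at this
      linarith
    exact hx1z (drccp_dot_lb_zero this)
  -- both nonzero: they are positive multiples of each other
  have H1' : ∀ ζ, -(θ * Np x₁ - b₁) < x₁ ⬝ᵥ ζ → -(θ * Np x₂ - b₁) ≤ x₂ ⬝ᵥ ζ := by
    intro ζ h
    have := H1 ζ (by rw [hgform]; linarith)
    rw [hgform] at this
    linarith
  obtain ⟨cc, hcc⟩ := drccp_proportional hx1z H1'
  have hS₁ : 0 < x₁ ⬝ᵥ x₁ := drccp_dot_self_pos hx1z
  have hval : ∀ v : ℝ, x₁ ⬝ᵥ ((v / (x₁ ⬝ᵥ x₁)) • x₁) = v := by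
    intro v
    rw [dotProduct_smul, smul_eq_mul, div_mul_cancel₀ _ hS₁.ne']
  have hccne : cc ≠ 0 := by
    intro h
    rw [h, zero_smul] at hcc
    exact hx2z hcc
  have hdot2 : ∀ ζ, x₂ ⬝ᵥ ζ = cc * (x₁ ⬝ᵥ ζ) := by
    intro ζ
    rw [hcc, smul_dotProduct, smul_eq_mul]
  -- abbreviate the affine constants
  obtain ⟨A₁, hA₁⟩ : ∃ a : ℝ, a = θ * Np x₁ - b₁ := ⟨_, rfl⟩
  obtain ⟨A₂, hA₂⟩ : ∃ a : ℝ, a = θ * Np x₂ - b₁ := ⟨_, rfl⟩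
  rw [← hA₁, ← hA₂] at H1'
  -- scalar form of the sign conditions
  have Hv : ∀ v : ℝ, -A₁ < v → -A₂ ≤ cc * v := by
    intro v hv
    have := H1' ((v / (x₁ ⬝ᵥ x₁)) • x₁) (by rw [hval]; exact hv)
    rwa [hdot2, hval] at this
  have Hv' : ∀ v : ℝ, -A₂ < cc * v → -A₁ ≤ v := by
    intro v hv
    have h := H2 ((v / (x₁ ⬝ᵥ x₁)) • x₁) ?_
    · rw [hgform, hval, ← hA₁] at h
      linarith
    · rw [hgform, hdot2, hval, ← hA₂]
      linarith
  have hccpos : 0 < cc := by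
    rcases hccne.lt_or_gt with hneg | hpos'
    · exfalso
      obtain ⟨v, hv1', hv2'⟩ : ∃ v : ℝ, -A₁ < v ∧ cc * v < -A₂ := by
        refine ⟨max (-A₁ + 1) ((-A₂ - 1) / cc), ?_, ?_⟩
        · calc -A₁ < -A₁ + 1 := by linarith
            _ ≤ _ := le_max_left _ _
        · have hle : (-A₂ - 1) / cc ≤ max (-A₁ + 1) ((-A₂ - 1) / cc) := le_max_right _ _
          have := mul_le_mul_of_nonpos_left hle hneg.le
          rw [mul_div_cancel₀ _ hccne] at this
          linarith
      exact absurd (Hv v hv1') (not_le.mpr hv2')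
    · exact hpos'
  -- the affine constants are proportional with the same ratio
  have e1' : -A₂ ≤ cc * (-A₁) := by
    by_contra h
    push_neg at h
    have hδ : (0:ℝ) < (-A₂ - cc * (-A₁)) / (2 * cc) :=
      div_pos (by linarith) (by linarith)
    have h2 := Hv (-A₁ + (-A₂ - cc * (-A₁)) / (2 * cc)) (by linarith)
    have h3 : cc * (-A₁ + (-A₂ - cc * (-A₁)) / (2 * cc)) =
        cc * (-A₁) + (-A₂ - cc * (-A₁)) / 2 := by
      field_simp
    rw [h3] at h2
    linarith
  have e2' : cc * (-A₁) ≤ -A₂ := by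
    by_contra h
    push_neg at h
    have hD : (0:ℝ) < cc * (-A₁) + A₂ := by linarith
    have h2 := Hv' (-A₁ - (cc * (-A₁) + A₂) / (2 * cc)) ?_
    · have : (0:ℝ) < (cc * (-A₁) + A₂) / (2 * cc) := div_pos hD (by linarith)
      linarith
    · have h3 : cc * (-A₁ - (cc * (-A₁) + A₂) / (2 * cc)) =
          cc * (-A₁) - (cc * (-A₁) + A₂) / 2 := by
        field_simp
      rw [h3]
      linarith
  have hA : A₂ = cc * A₁ := by linarith
  have hNp2 : Np x₂ = cc * Np x₁ := by rw [hcc, hNsmul cc hccpos.le]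
  by_cases hcc1 : cc = 1
  · rw [hcc, hcc1, one_smul]
  · exfalso
    -- then `b₁ = 0`, so `g x₂ = cc • g x₁` and `Fhat x₂ = cc * Fhat x₁`
    have hb0 : b₁ = 0 := by
      have hkey : (1 - cc) * b₁ = 0 := by
        linear_combination (-cc) * hA₁ + hA₂ + θ * hNp2 - hA
      rcases mul_eq_zero.mp hkey with h | h
      · exact absurd (by linarith : cc = 1) hcc1
      · exact h
    have hg2 : ∀ ζ, g x₂ ζ = cc * g x₁ ζ := by
      intro ζ
      rw [hgform x₂, hgform x₁, hdot2, hNp2, hb0]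
      ring
    have hF2 : Fhat x₂ = cc * Fhat x₁ := by
      rw [hg x₂, hg x₁]
      have hfun : (fun ζ => max (g x₂ ζ) 0) = fun ζ => cc * max (g x₁ ζ) 0 := by
        funext ζ
        rw [hg2 ζ, mul_max_of_nonneg _ _ hccpos.le, mul_zero]
      rw [hfun, integral_const_mul]
    rw [hF2] at h12
    refine hcc1 (mul_right_cancel₀ hv1.ne' ?_)
    rw [one_mul]
    exact h12.symm
end

section
/- Theorem (uniqueness for joint DRCCPs with right-hand-side uncertainty and a continuous reference distribution). For every t ∈ ℝ such that F_t ≠ ∅ and inf_{x∈F_t} F̂(x) > 0, the problem min_{x∈F_t} F̂(x) has at most one minimizer; i.e., the lower-level ALSO-X problem admits a unique optimal solution whenever its optimal value is positive. -/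
open MeasureTheory

/-- **Uniqueness for joint DRCCPs with right-hand-side uncertainty and a continuous reference
distribution.**  The lower-level ALSO-X objective is
`F̂(x) = E_P[max_{i ∈ [n]} (ζᵢ + θ - xᵢ)₊]`.  For every level `t` at which the feasible region
`F t = {x ∈ X : cᵀx ≤ t}` is nonempty and the lower-level ALSO-X optimal value is positive,
the lower-level ALSO-X problem `min_{x ∈ F t} F̂(x)` has at most one minimizer. -/
theorem joint_drccp_rhs_lower_level_unique
    (n : ℕ) (hn : 1 ≤ n)
    (c : Fin n → ℝ) (θ : ℝ) (hθ : 0 ≤ θ)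
    (X : Set (Fin n → ℝ)) (hX : Convex ℝ X)
    (P : Measure (Fin n → ℝ)) [IsProbabilityMeasure P]
    (hPint : Integrable (fun ζ : Fin n → ℝ => ‖ζ‖) P)
    -- `P` has a continuous, everywhere strictly positive density w.r.t. Lebesgue measure
    (ρ : (Fin n → ℝ) → ℝ) (hρc : Continuous ρ) (hρpos : ∀ z, 0 < ρ z)
    (hPd : P = volume.withDensity fun z => ENNReal.ofReal (ρ z))
    -- the lower-level ALSO-X objective
    (Fhat : (Fin n → ℝ) → ℝ)
    (hFhat : ∀ x, Fhat x = ∫ ζ, (⨆ i : Fin n, max (ζ i + θ - x i) 0) ∂P) :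
    ∀ t : ℝ,
      ({x ∈ X | ∑ i, c i * x i ≤ t}).Nonempty →
      0 < sInf (Fhat '' {x ∈ X | ∑ i, c i * x i ≤ t}) →
      ∀ x₁ ∈ {x ∈ X | ∑ i, c i * x i ≤ t}, ∀ x₂ ∈ {x ∈ X | ∑ i, c i * x i ≤ t},
        IsMinOn Fhat {x ∈ X | ∑ i, c i * x i ≤ t} x₁ →
        IsMinOn Fhat {x ∈ X | ∑ i, c i * x i ≤ t} x₂ → x₁ = x₂ := by
  intro t _ _ x₁ hx₁ x₂ hx₂ hmin₁ hmin₂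
  by_contra hne
  haveI : NeZero n := ⟨by omega⟩
  haveI : Nonempty (Fin n) := ⟨⟨0, by omega⟩⟩
  -- the finite-sup form of the integrand
  set g : (Fin n → ℝ) → (Fin n → ℝ) → ℝ :=
    fun x ζ => Finset.univ.sup' Finset.univ_nonempty fun i => max (ζ i + θ - x i) 0 with hg
  have hgFhat : ∀ x, Fhat x = ∫ ζ, g x ζ ∂P := by
    intro x
    rw [hFhat x]
    congr 1
    funext ζ
    rw [hg]
    exact (Finset.sup'_univ_eq_ciSup _).symm
  -- basic facts about g
  have hgcont : ∀ x, Continuous fun ζ => g x ζ := by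
    intro x
    apply Continuous.finset_sup'_apply Finset.univ_nonempty
    intro i _
    exact ((continuous_apply i).add continuous_const).sub continuous_const |>.max continuous_const
  have hgnonneg : ∀ x ζ, 0 ≤ g x ζ := by
    intro x ζ
    exact le_trans (le_max_right _ 0)
      (Finset.le_sup' (fun i => max (ζ i + θ - x i) 0) (Finset.mem_univ (Classical.arbitrary _)))
  have hle : ∀ x ζ i, max (ζ i + θ - x i) 0 ≤ g x ζ := by
    intro x ζ i
    rw [hg]
    exact Finset.le_sup' (fun k => max (ζ k + θ - x k) 0) (Finset.mem_univ i)
  have hgbound : ∀ x ζ, g x ζ ≤ ‖ζ‖ + (|θ| + ‖x‖) := by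
    intro x ζ
    apply Finset.sup'_le
    intro i _
    rcases le_total (ζ i + θ - x i) 0 with h | h
    · simp only [max_eq_right h]
      positivity
    · rw [max_eq_left h]
      have h1 : ζ i ≤ ‖ζ‖ := le_trans (le_abs_self _) (norm_le_pi_norm ζ i)
      have h2 : -x i ≤ ‖x‖ := le_trans (neg_le_abs _) (norm_le_pi_norm x i)
      have h3 : θ ≤ |θ| := le_abs_self θ
      linarith
  have hgint : ∀ x, Integrable (fun ζ => g x ζ) P := by
    intro x
    refine Integrable.mono (hPint.add (integrable_const (|θ| + ‖x‖)))
      ((hgcont x).aestronglyMeasurable) ?_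
    filter_upwards with ζ
    rw [Real.norm_eq_abs, abs_of_nonneg (hgnonneg x ζ)]
    refine le_trans (hgbound x ζ) ?_
    rw [Real.norm_eq_abs]
    have : ‖ζ‖ + (|θ| + ‖x‖) ≤ |‖ζ‖ + (|θ| + ‖x‖)| := le_abs_self _
    exact this
  -- the midpoint
  set m : Fin n → ℝ := fun i => (x₁ i + x₂ i) / 2 with hm
  have hmX : m ∈ {x ∈ X | ∑ i, c i * x i ≤ t} := by
    constructor
    · have := hX hx₁.1 hx₂.1 (by norm_num : (0:ℝ) ≤ 1/2) (by norm_num : (0:ℝ) ≤ 1/2)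
        (by norm_num)
      convert this using 1
      funext i
      simp [hm, Pi.smul_apply, smul_eq_mul]
      ring
    · have h1 := hx₁.2
      have h2 := hx₂.2
      have : ∑ i, c i * m i = (∑ i, c i * x₁ i + ∑ i, c i * x₂ i) / 2 := by
        rw [← Finset.sum_add_distrib, Finset.sum_div]
        congr 1
        funext i
        simp [hm]
        ring
      rw [this]
      linarith
  -- pointwise convexity
  have hconv : ∀ ζ, g m ζ ≤ (g x₁ ζ + g x₂ ζ) / 2 := by
    intro ζ
    apply Finset.sup'_le
    intro i _
    have h1 : max (ζ i + θ - x₁ i) 0 ≤ g x₁ ζ := hle x₁ ζ i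
    have h2 : max (ζ i + θ - x₂ i) 0 ≤ g x₂ ζ := hle x₂ ζ i
    have key : max (ζ i + θ - m i) 0
        ≤ (max (ζ i + θ - x₁ i) 0 + max (ζ i + θ - x₂ i) 0) / 2 := by
      have e : ζ i + θ - m i = ((ζ i + θ - x₁ i) + (ζ i + θ - x₂ i)) / 2 := by
        simp [hm]; ring
      rw [e]
      rcases le_total ((ζ i + θ - x₁ i) + (ζ i + θ - x₂ i)) 0 with h | h
      · rw [max_eq_right (by linarith)]
        have := le_max_right (ζ i + θ - x₁ i) 0
        have := le_max_right (ζ i + θ - x₂ i) 0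
        linarith
      · rw [max_eq_left (by linarith)]
        have := le_max_left (ζ i + θ - x₁ i) 0
        have := le_max_left (ζ i + θ - x₂ i) 0
        linarith
    linarith
  -- a coordinate where x₁ ≠ x₂
  obtain ⟨j, hj⟩ : ∃ j, x₁ j ≠ x₂ j := by
    by_contra h
    push_neg at h
    exact hne (funext h)
  set d : ℝ := |x₁ j - x₂ j| / 2 with hd
  have hdpos : 0 < d := by
    rw [hd]
    have h1 : x₁ j - x₂ j ≠ 0 := sub_ne_zero.mpr hj
    have h2 := abs_pos.mpr h1
    linarith
  -- one of x₁, x₂ has j-th coordinate m j - d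
  have hlow : x₁ j = m j - d ∨ x₂ j = m j - d := by
    rcases abs_cases (x₁ j - x₂ j) with ⟨he, _⟩ | ⟨he, _⟩
    · right; simp [hm, hd, he]; ring
    · left; simp [hm, hd, he]; ring
  -- the open set where strict convexity holds
  set U : Set (Fin n → ℝ) :=
    {ζ | (∀ i, ζ i < m i - θ + d/8) ∧ m j - θ - d/2 < ζ j} with hU
  have hUopen : IsOpen U := by
    have h1 : IsOpen {ζ : Fin n → ℝ | ∀ i, ζ i < m i - θ + d/8} := by
      rw [Set.setOf_forall]
      exact isOpen_iInter_of_finite fun i =>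
        isOpen_lt (continuous_apply i) continuous_const
    exact h1.inter (isOpen_lt continuous_const (continuous_apply j))
  have hUne : U.Nonempty := by
    refine ⟨fun i => m i - θ, fun i => by simp; linarith, by simp; linarith⟩
  -- strict inequality on U
  have hstrict : ∀ ζ ∈ U, g m ζ + d/8 ≤ (g x₁ ζ + g x₂ ζ) / 2 := by
    intro ζ hζ
    obtain ⟨hall, hj'⟩ := hζ
    have hgm : g m ζ ≤ d/8 := by
      apply Finset.sup'_le
      intro i _
      have := hall i
      rcases le_total (ζ i + θ - m i) 0 with h | h
      · rw [max_eq_right h]; linarith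
      · rw [max_eq_left h]; linarith
    have hbig : d/2 ≤ g x₁ ζ + g x₂ ζ := by
      rcases hlow with he | he
      · have : ζ j + θ - x₁ j > d/2 := by rw [he]; linarith
        have h1 : d/2 ≤ max (ζ j + θ - x₁ j) 0 := le_trans (by linarith) (le_max_left _ 0)
        have h2 : max (ζ j + θ - x₁ j) 0 ≤ g x₁ ζ := hle x₁ ζ j
        have := hgnonneg x₂ ζ
        linarith
      · have : ζ j + θ - x₂ j > d/2 := by rw [he]; linarith
        have h1 : d/2 ≤ max (ζ j + θ - x₂ j) 0 := le_trans (by linarith) (le_max_left _ 0)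
        have h2 : max (ζ j + θ - x₂ j) 0 ≤ g x₂ ζ := hle x₂ ζ j
        have := hgnonneg x₁ ζ
        linarith
    linarith
  -- P U > 0
  have hPU : 0 < P U := by
    rw [pos_iff_ne_zero]
    intro h0
    rw [hPd, withDensity_apply_eq_zero (by
      exact ENNReal.measurable_ofReal.comp hρc.measurable)] at h0
    have : {z | ENNReal.ofReal (ρ z) ≠ 0} = Set.univ := by
      ext z
      simp only [Set.mem_setOf_eq, Set.mem_univ, iff_true, ne_eq]
      simp [ENNReal.ofReal_eq_zero, not_le, hρpos z]
    rw [this, Set.univ_inter] at h0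
    exact absurd h0 (hUopen.measure_pos volume hUne).ne'
  -- strict integral inequality
  set D : (Fin n → ℝ) → ℝ := fun ζ => (g x₁ ζ + g x₂ ζ) / 2 - g m ζ with hD
  have hDnonneg : ∀ ζ, 0 ≤ D ζ := fun ζ => by simp [hD]; linarith [hconv ζ]
  have hsum : Integrable (fun ζ => (g x₁ ζ + g x₂ ζ) / 2) P := by
    have := ((hgint x₁).add (hgint x₂)).div_const 2
    simpa using this
  have hDint : Integrable D P := hsum.sub (hgint m)
  have hDpos : 0 < ∫ ζ, D ζ ∂P := by
    rw [integral_pos_iff_support_of_nonneg hDnonneg hDint]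
    refine lt_of_lt_of_le hPU (measure_mono ?_)
    intro ζ hζ
    have := hstrict ζ hζ
    simp only [Function.mem_support, hD]
    intro h
    rw [sub_eq_zero] at h
    rw [← h] at this
    linarith
  have hint : ∫ ζ, g m ζ ∂P < (∫ ζ, g x₁ ζ ∂P + ∫ ζ, g x₂ ζ ∂P) / 2 := by
    have e : ∫ ζ, D ζ ∂P = ∫ ζ, (g x₁ ζ + g x₂ ζ) / 2 ∂P - ∫ ζ, g m ζ ∂P :=
      integral_sub hsum (hgint m)
    have e2 : ∫ ζ, (g x₁ ζ + g x₂ ζ) / 2 ∂P = (∫ ζ, g x₁ ζ ∂P + ∫ ζ, g x₂ ζ ∂P) / 2 := by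
      rw [integral_div, integral_add (hgint x₁) (hgint x₂)]
    linarith [hDpos]
  -- contradiction with minimality
  have heq : Fhat x₁ = Fhat x₂ := le_antisymm (hmin₁ hx₂) (hmin₂ hx₁)
  have hm1 : Fhat x₁ ≤ Fhat m := hmin₁ hmX
  rw [hgFhat x₁, hgFhat x₂] at heq
  rw [hgFhat x₁, hgFhat m] at hm1
  linarith
end

section
/- Theorem (exactness of ALSO-X# under monotonicity). Assume Ĝ and F̄ are monotone nondecreasing. Suppose x* ∈ X is an optimal solution of the program v* (i.e., Ĝ(hᵀx*) ≤ 0 and cᵀx* ≤ cᵀx for every x ∈ X with Ĝ(hᵀx) ≤ 0), and suppose the lower-level problem at level t* := cᵀx* attains its minimum. Then there exists a minimizer x̂ of F̄(hᵀ·) over {x ∈ X : cᵀx ≤ t*} with Ĝ(hᵀx̂) ≤ 0; moreover, any such x̂ satisfies cᵀx̂ = v* and is therefore an optimal solution of the original program, so the ALSO-X#-underline scheme (and hence ALSO-X#) is exact: its output value equals v*. -/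
/-- **Exactness of ALSO-X# under monotonicity.**
With monotone nondecreasing `Ĝ` and `F̄`, if `x*` is optimal for the program
`v* = min{cᵀx : x ∈ X, Ĝ(hᵀx) ≤ 0}` and the lower-level problem
`min{F̄(hᵀx) : x ∈ X, cᵀx ≤ t*}` with `t* = cᵀx*` attains its minimum, then it has a
minimizer `x̂` with `Ĝ(hᵀx̂) ≤ 0`; moreover any such minimizer satisfies `cᵀx̂ = v*` and is
an optimal solution of the original program. -/
theorem alsoxSharp_exact_of_monotone
    (n : ℕ) (hn : 1 ≤ n)
    (c h : Fin n → ℝ) (X : Set (Fin n → ℝ))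
    (Ghat Fbar : ℝ → ℝ)
    (hG : Monotone Ghat) (hF : Monotone Fbar)
    -- `x*` is an optimal solution of `v* = min{cᵀx : x ∈ X, Ĝ(hᵀx) ≤ 0}`
    (xstar : Fin n → ℝ) (hx1 : xstar ∈ X) (hx2 : Ghat (∑ k, h k * xstar k) ≤ 0)
    (hx3 : ∀ x ∈ X, Ghat (∑ k, h k * x k) ≤ 0 → ∑ k, c k * xstar k ≤ ∑ k, c k * x k)
    -- the lower-level feasible set at level `t* = cᵀx*`
    (S : Set (Fin n → ℝ))
    (hS : S = {x ∈ X | ∑ k, c k * x k ≤ ∑ k, c k * xstar k})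
    -- the lower-level problem attains its minimum
    (hattain : ∃ x ∈ S, IsMinOn (fun x => Fbar (∑ k, h k * x k)) S x) :
    (∃ xhat ∈ S, IsMinOn (fun x => Fbar (∑ k, h k * x k)) S xhat ∧
        Ghat (∑ k, h k * xhat k) ≤ 0) ∧
    (∀ xhat ∈ S, IsMinOn (fun x => Fbar (∑ k, h k * x k)) S xhat →
        Ghat (∑ k, h k * xhat k) ≤ 0 →
        ∑ k, c k * xhat k = ∑ k, c k * xstar k ∧
        ∀ x ∈ X, Ghat (∑ k, h k * x k) ≤ 0 → ∑ k, c k * xhat k ≤ ∑ k, c k * x k) := by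
  have hxstarS : xstar ∈ S := by
    rw [hS]; exact ⟨hx1, le_refl _⟩
  constructor
  · obtain ⟨x0, hx0S, hx0min⟩ := hattain
    by_cases hg : Ghat (∑ k, h k * x0 k) ≤ 0
    · exact ⟨x0, hx0S, hx0min, hg⟩
    · -- then hᵀxstar ≤ hᵀx0, so xstar is also a minimizer
      have hlt : ∑ k, h k * xstar k ≤ ∑ k, h k * x0 k := by
        by_contra hle
        push_neg at hle
        exact hg (le_trans (hG hle.le) hx2)
      refine ⟨xstar, hxstarS, ?_, hx2⟩
      intro y hyS
      have h1 : Fbar (∑ k, h k * xstar k) ≤ Fbar (∑ k, h k * x0 k) := hF hlt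
      exact le_trans h1 (hx0min hyS)
  · intro xhat hxhatS hmin hg
    have hxhatX : xhat ∈ X := by rw [hS] at hxhatS; exact hxhatS.1
    have hle1 : ∑ k, c k * xhat k ≤ ∑ k, c k * xstar k := by
      rw [hS] at hxhatS; exact hxhatS.2
    have hle2 := hx3 xhat hxhatX hg
    refine ⟨le_antisymm hle1 hle2, ?_⟩
    intro x hxX hgx
    exact le_trans hle1 (hx3 x hxX hgx)
end

section
/- Corollary (exactness of ALSO-X# for single packing DRCCPs with binary decisions and i.i.d. nonnegative random parameters). Suppose v* is attained at some x* ∈ X and the lower-level problem min{ CVaR_{1−ε}( w(x,ζ) − b₁ ) : x ∈ X, cᵀx ≤ v* } attains its minimum. Then this lower-level problem has a minimizer x̂ that is feasible; moreover, any such x̂ satisfies cᵀx̂ = v*, i.e., ALSO-X# is exact for this class of problems. -/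
/-!
For `x ≥ 0` and `z ≥ 0` the worst case over the type-∞ ball splits as `z ⬝ x + C(x)`, where
`C(x)`, the worst case around `0`, is monotone in `x` and invariant under permuting coordinates.
As the `ζ i` are i.i.d., permuting a decision does not change the law of its loss, so
feasibility and the CVaR objective only get worse as one adds ones to a binary decision, up to
permutation. Hence a lower-level minimizer with no more ones than `x*` is feasible, and otherwise
`x*` itself is a lower-level minimizer. A feasible point of the lower level costs at most `v*`,
hence exactly `v*`.
-/

open MeasureTheory ProbabilityTheory Finset

section

variable {ι : Type*} [Fintype ι]

def IsLpNorm (Np : (ι → ℝ) → ℝ) : Prop :=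
  (∃ p : ℝ, 1 ≤ p ∧ ∀ ξ, Np ξ = (∑ i, |ξ i| ^ p) ^ (1 / p)) ∨ (∀ ξ, Np ξ = ⨆ i, |ξ i|)

namespace IsLpNorm

variable {Np : (ι → ℝ) → ℝ}

theorem map_zero (hNp : IsLpNorm Np) : Np 0 = 0 := by
  rcases hNp with ⟨p, hp, hN⟩ | hN
  · have hp0 : p ≠ 0 := by linarith
    simp [hN, Real.zero_rpow hp0, Real.zero_rpow (inv_ne_zero hp0)]
  · simp [hN, Real.iSup_const_zero]

theorem le_of_abs_le (hNp : IsLpNorm Np) {a b : ι → ℝ} (h : ∀ i, |a i| ≤ |b i|) :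
    Np a ≤ Np b := by
  rcases hNp with ⟨p, hp, hN⟩ | hN
  · rw [hN, hN]
    have hp0 : (0 : ℝ) ≤ p := by linarith
    exact Real.rpow_le_rpow (by positivity)
      (sum_le_sum fun i _ => Real.rpow_le_rpow (abs_nonneg _) (h i) hp0) (by positivity)
  · rw [hN, hN]
    exact ciSup_mono (Set.finite_range _).bddAbove h

theorem abs_apply_le (hNp : IsLpNorm Np) (a : ι → ℝ) (i : ι) : |a i| ≤ Np a := by
  rcases hNp with ⟨p, hp, hN⟩ | hN
  · have hp0 : (0 : ℝ) < p := by linarith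
    calc |a i| = (|a i| ^ p) ^ (1 / p) := by
          rw [← Real.rpow_mul (abs_nonneg _), mul_one_div_cancel hp0.ne', Real.rpow_one]
      _ ≤ (∑ j, |a j| ^ p) ^ (1 / p) := by
          gcongr
          exact single_le_sum (f := fun j => |a j| ^ p) (fun j _ => by positivity) (mem_univ i)
      _ = Np a := (hN a).symm
  · rw [hN]
    exact le_ciSup (f := fun j => |a j|) (Set.finite_range _).bddAbove i

theorem comp_perm (hNp : IsLpNorm Np) (σ : Equiv.Perm ι) (a : ι → ℝ) : Np (a ∘ σ) = Np a := by
  rcases hNp with ⟨p, hp, hN⟩ | hN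
  · rw [hN, hN]
    exact congrArg (· ^ (1 / p)) (Equiv.sum_comp σ fun i => |a i| ^ p)
  · rw [hN, hN]
    exact σ.iSup_comp (g := fun i => |a i|)

end IsLpNorm

section WorstCase

variable (Np : (ι → ℝ) → ℝ) (θ : ℝ)

def worstCaseValues (x z : ι → ℝ) : Set ℝ :=
  {s | ∃ ξ : ι → ℝ, (∀ i, 0 ≤ ξ i) ∧ Np (ξ - z) ≤ θ ∧ s = ∑ i, ξ i * x i}

noncomputable def worstCaseValue (x z : ι → ℝ) : ℝ :=
  sSup (worstCaseValues Np θ x z)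

variable {Np θ} (hNp : IsLpNorm Np)
include hNp

theorem bddAbove_worstCaseValues {x : ι → ℝ} (hx : 0 ≤ x) (z : ι → ℝ) :
    BddAbove (worstCaseValues Np θ x z) := by
  refine ⟨∑ i, (z i + θ) * x i, ?_⟩
  rintro s ⟨ξ, -, hξ, rfl⟩
  refine sum_le_sum fun i _ => mul_le_mul_of_nonneg_right ?_ (hx i)
  have := (le_abs_self _).trans ((hNp.abs_apply_le (ξ - z) i).trans hξ)
  rw [Pi.sub_apply] at this
  linarith

theorem sum_mul_mem_worstCaseValues (hθ : 0 ≤ θ) (x : ι → ℝ) {z : ι → ℝ} (hz : 0 ≤ z) :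
    ∑ i, z i * x i ∈ worstCaseValues Np θ x z :=
  ⟨z, hz, by rwa [sub_self, hNp.map_zero], rfl⟩

theorem worstCaseValue_mono (hθ : 0 ≤ θ) {x x' z : ι → ℝ} (hx' : 0 ≤ x') (hxx' : x ≤ x')
    (hz : 0 ≤ z) : worstCaseValue Np θ x z ≤ worstCaseValue Np θ x' z := by
  refine csSup_le ⟨_, sum_mul_mem_worstCaseValues hNp hθ x hz⟩ ?_
  rintro s ⟨ξ, hξ0, hξ, rfl⟩
  calc ∑ i, ξ i * x i ≤ ∑ i, ξ i * x' i :=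
        sum_le_sum fun i _ => mul_le_mul_of_nonneg_left (hxx' i) (hξ0 i)
    _ ≤ worstCaseValue Np θ x' z :=
        le_csSup (bddAbove_worstCaseValues hNp hx' z) ⟨ξ, hξ0, hξ, rfl⟩

/-- `ξ ≤ z + (ξ - z)⁺`, and `(ξ - z)⁺` is an admissible perturbation of `0`. -/
theorem worstCaseValue_le_sum_mul_add (hθ : 0 ≤ θ) {x z : ι → ℝ} (hx : 0 ≤ x) (hz : 0 ≤ z) :
    worstCaseValue Np θ x z ≤ ∑ i, z i * x i + worstCaseValue Np θ x 0 := by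
  refine csSup_le ⟨_, sum_mul_mem_worstCaseValues hNp hθ x hz⟩ ?_
  rintro s ⟨ξ, -, hξ, rfl⟩
  set d : ι → ℝ := fun i => max (ξ i - z i) 0
  have hd0 : ∀ i, 0 ≤ d i := fun i => le_max_right _ _
  have hdθ : Np (d - 0) ≤ θ := by
    refine (hNp.le_of_abs_le fun i => ?_).trans hξ
    rw [sub_zero, Pi.sub_apply, abs_of_nonneg (hd0 i)]
    exact max_le (le_abs_self _) (abs_nonneg _)
  calc ∑ i, ξ i * x i ≤ ∑ i, (z i + d i) * x i :=
        sum_le_sum fun i _ => mul_le_mul_of_nonneg_right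
          (by linarith [le_max_left (ξ i - z i) 0]) (hx i)
    _ = ∑ i, z i * x i + ∑ i, d i * x i := by simp only [add_mul, sum_add_distrib]
    _ ≤ ∑ i, z i * x i + worstCaseValue Np θ x 0 := by
        gcongr
        exact le_csSup (bddAbove_worstCaseValues hNp hx 0) ⟨d, hd0, hdθ, rfl⟩

theorem sum_mul_add_worstCaseValue_le (hθ : 0 ≤ θ) {x z : ι → ℝ} (hx : 0 ≤ x) (hz : 0 ≤ z) :
    ∑ i, z i * x i + worstCaseValue Np θ x 0 ≤ worstCaseValue Np θ x z := by
  rw [← le_sub_iff_add_le']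
  refine csSup_le ⟨_, sum_mul_mem_worstCaseValues hNp hθ x le_rfl⟩ ?_
  rintro s ⟨ξ, hξ0, hξ, rfl⟩
  rw [le_sub_iff_add_le', ← sum_add_distrib]
  refine le_csSup (bddAbove_worstCaseValues hNp hx z)
    ⟨z + ξ, fun i => add_nonneg (hz i) (hξ0 i), by simpa using hξ, ?_⟩
  simp only [Pi.add_apply, add_mul]

theorem worstCaseValue_eq_sum_mul_add (hθ : 0 ≤ θ) {x z : ι → ℝ} (hx : 0 ≤ x) (hz : 0 ≤ z) :
    worstCaseValue Np θ x z = ∑ i, z i * x i + worstCaseValue Np θ x 0 :=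
  (worstCaseValue_le_sum_mul_add hNp hθ hx hz).antisymm
    (sum_mul_add_worstCaseValue_le hNp hθ hx hz)

theorem worstCaseValues_comp_perm_subset (σ : Equiv.Perm ι) (x z : ι → ℝ) :
    worstCaseValues Np θ (x ∘ σ) (z ∘ σ) ⊆ worstCaseValues Np θ x z := by
  rintro s ⟨ξ, hξ0, hξ, rfl⟩
  refine ⟨ξ ∘ σ.symm, fun i => hξ0 _, ?_, ?_⟩
  · rw [← hNp.comp_perm σ]
    convert hξ using 2
    ext i
    simp
  · rw [← Equiv.sum_comp σ fun i => (ξ ∘ σ.symm) i * x i]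
    simp

theorem worstCaseValue_comp_perm (σ : Equiv.Perm ι) (x z : ι → ℝ) :
    worstCaseValue Np θ (x ∘ σ) (z ∘ σ) = worstCaseValue Np θ x z := by
  refine congrArg sSup ((worstCaseValues_comp_perm_subset hNp σ x z).antisymm ?_)
  simpa [Function.comp_assoc] using worstCaseValues_comp_perm_subset hNp σ.symm (x ∘ σ) (z ∘ σ)

end WorstCase

theorem exists_perm_comp_le_of_card_le {x y : ι → ℝ} (hx : ∀ i, x i = 0 ∨ x i = 1)
    (hy : 0 ≤ y) (hcard : #{i | x i = 1} ≤ #{i | y i = 1}) :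
    ∃ σ : Equiv.Perm ι, x ∘ σ ≤ y := by
  obtain ⟨B, hB, hBcard⟩ := exists_subset_card_eq hcard
  obtain ⟨σ, hσ⟩ := Equiv.Perm.exists_map_finset_eq B _ hBcard
  refine ⟨σ, fun i => ?_⟩
  rcases hx (σ i) with h0 | h1
  · simpa [h0] using hy i
  · have hi : i ∈ B := by simpa using (show σ i ∈ B.map σ.toEmbedding by simp [hσ, h1])
    have hyi : y i = 1 := by simpa using hB hi
    simp [h1, hyi]

theorem ProbabilityTheory.iIndepFun.identDistrib_comp_perm {Ω β : Type*} [MeasurableSpace Ω]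
    [MeasurableSpace β] {μ : Measure Ω} [IsProbabilityMeasure μ] {ζ : ι → Ω → β}
    (hmeas : ∀ i, Measurable (ζ i)) (hindep : iIndepFun ζ μ)
    (hident : ∀ i j, IdentDistrib (ζ i) (ζ j) μ μ) (σ : Equiv.Perm ι) :
    IdentDistrib (fun ω i => ζ (σ i) ω) (fun ω i => ζ i ω) μ μ where
  aemeasurable_fst := (measurable_pi_lambda _ fun i => hmeas (σ i)).aemeasurable
  aemeasurable_snd := (measurable_pi_lambda _ hmeas).aemeasurable
  map_eq := by
    rw [(iIndepFun_iff_map_fun_eq_pi_map fun i => (hmeas (σ i)).aemeasurable).1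
        (hindep.precomp σ.injective),
      (iIndepFun_iff_map_fun_eq_pi_map fun i => (hmeas i).aemeasurable).1 hindep]
    exact congrArg Measure.pi (funext fun i => (hident (σ i) i).map_eq)

section CVaR

variable {Ω : Type*} [MeasurableSpace Ω]

noncomputable def cvar (ε : ℝ) (μ : Measure Ω) (Z : Ω → ℝ) : ℝ :=
  ⨅ β : ℝ, (β + ε⁻¹ * ∫ ω, max (Z ω - β) 0 ∂μ)

theorem integral_le_cvar_objective {ε : ℝ} (hε0 : 0 < ε) (hε1 : ε ≤ 1) {μ : Measure Ω}
    [IsProbabilityMeasure μ] {Z : Ω → ℝ} (hZ : Integrable Z μ) (β : ℝ) :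
    ∫ ω, Z ω ∂μ ≤ β + ε⁻¹ * ∫ ω, max (Z ω - β) 0 ∂μ := by
  have hpos : 0 ≤ ∫ ω, max (Z ω - β) 0 ∂μ := integral_nonneg fun ω => le_max_right _ _
  have hsub : ∫ ω, Z ω ∂μ - β ≤ ∫ ω, max (Z ω - β) 0 ∂μ := by
    have : ∫ ω, (Z ω - β) ∂μ = ∫ ω, Z ω ∂μ - β := by
      simp [integral_sub hZ (integrable_const β)]
    rw [← this]
    exact integral_mono (hZ.sub (integrable_const β)) (hZ.sub (integrable_const β)).pos_part
      fun ω => le_max_left _ _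
  have hscale : ∫ ω, max (Z ω - β) 0 ∂μ ≤ ε⁻¹ * ∫ ω, max (Z ω - β) 0 ∂μ :=
    le_mul_of_one_le_left hpos ((one_le_inv₀ hε0).2 hε1)
  linarith

theorem cvar_mono {ε : ℝ} (hε0 : 0 < ε) (hε1 : ε ≤ 1) {μ : Measure Ω} [IsProbabilityMeasure μ]
    {Z Z' : Ω → ℝ} (hZ : Integrable Z μ) (hZ' : Integrable Z' μ) (h : Z ≤ Z') :
    cvar ε μ Z ≤ cvar ε μ Z' := by
  refine ciInf_mono ⟨_, Set.forall_mem_range.2 (integral_le_cvar_objective hε0 hε1 hZ)⟩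
    fun β => ?_
  gcongr β + _ * ?_
  exact integral_mono (hZ.sub (integrable_const β)).pos_part
    (hZ'.sub (integrable_const β)).pos_part
    fun ω => max_le_max_right 0 (sub_le_sub_right (h ω) β)

theorem ProbabilityTheory.IdentDistrib.cvar_eq {Ω' : Type*} [MeasurableSpace Ω'] {μ : Measure Ω}
    {μ' : Measure Ω'} {Z : Ω → ℝ} {Z' : Ω' → ℝ} (h : IdentDistrib Z Z' μ μ') (ε : ℝ) :
    cvar ε μ Z = cvar ε μ' Z' :=
  iInf_congr fun β => by
    congr 2
    exact (h.comp ((measurable_id.sub_const β).max measurable_const)).integral_eq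

end CVaR

section WorstCaseLoss

variable {Ω : Type*}

noncomputable def worstCaseLoss (Np : (ι → ℝ) → ℝ) (θ : ℝ) (ζ : ι → Ω → ℝ) (x : ι → ℝ)
    (ω : Ω) : ℝ :=
  worstCaseValue Np θ x fun i => ζ i ω

variable {Np : (ι → ℝ) → ℝ} {θ : ℝ} {ζ : ι → Ω → ℝ} {x x' : ι → ℝ}

theorem worstCaseLoss_eq (hNp : IsLpNorm Np) (hθ : 0 ≤ θ) (hζ : ∀ i ω, 0 ≤ ζ i ω)
    (hx : 0 ≤ x) :
    worstCaseLoss Np θ ζ x = fun ω => ∑ i, ζ i ω * x i + worstCaseValue Np θ x 0 :=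
  funext fun ω => worstCaseValue_eq_sum_mul_add hNp hθ hx fun i => hζ i ω

variable [MeasurableSpace Ω] {μ : Measure Ω} [IsProbabilityMeasure μ] {σ : Equiv.Perm ι}

theorem integrable_worstCaseLoss (hNp : IsLpNorm Np) (hθ : 0 ≤ θ) (hζ : ∀ i ω, 0 ≤ ζ i ω)
    (hint : ∀ i, Integrable (ζ i) μ) (hx : 0 ≤ x) : Integrable (worstCaseLoss Np θ ζ x) μ := by
  rw [worstCaseLoss_eq hNp hθ hζ hx]
  exact (integrable_finsetSum _ fun i _ => (hint i).mul_const (x i)).add (integrable_const _)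

/-- Permuting the decision is the same as permuting the (exchangeable) parameters. -/
theorem identDistrib_worstCaseLoss_comp_perm (hNp : IsLpNorm Np) (hθ : 0 ≤ θ)
    (hmeas : ∀ i, Measurable (ζ i)) (hindep : iIndepFun ζ μ)
    (hident : ∀ i j, IdentDistrib (ζ i) (ζ j) μ μ) (hζ : ∀ i ω, 0 ≤ ζ i ω) (hx : 0 ≤ x)
    (σ : Equiv.Perm ι) :
    IdentDistrib (worstCaseLoss Np θ ζ (x ∘ σ)) (worstCaseLoss Np θ ζ x) μ μ := by
  have hxσ : 0 ≤ x ∘ σ := fun i => hx (σ i)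
  have hC : worstCaseValue Np θ (x ∘ σ) 0 = worstCaseValue Np θ x 0 :=
    worstCaseValue_comp_perm hNp σ x 0
  rw [worstCaseLoss_eq hNp hθ hζ hxσ, worstCaseLoss_eq hNp hθ hζ hx, hC]
  have hF : Measurable fun y : ι → ℝ => ∑ i, y i * x i + worstCaseValue Np θ x 0 := by
    fun_prop
  convert (hindep.identDistrib_comp_perm hmeas hident σ.symm).comp hF using 1
  · funext ω
    simp only [Function.comp_apply]
    rw [← Equiv.sum_comp σ fun i => ζ (σ.symm i) ω * x i]
    simp
  · rfl

theorem measure_worstCaseLoss_le_le_of_comp_perm_le (hNp : IsLpNorm Np) (hθ : 0 ≤ θ)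
    (hmeas : ∀ i, Measurable (ζ i)) (hindep : iIndepFun ζ μ)
    (hident : ∀ i j, IdentDistrib (ζ i) (ζ j) μ μ) (hζ : ∀ i ω, 0 ≤ ζ i ω) (hx : 0 ≤ x)
    (hx' : 0 ≤ x') (hσ : x ∘ σ ≤ x') (b : ℝ) :
    μ {ω | worstCaseLoss Np θ ζ x' ω ≤ b} ≤ μ {ω | worstCaseLoss Np θ ζ x ω ≤ b} :=
  calc μ {ω | worstCaseLoss Np θ ζ x' ω ≤ b}
      ≤ μ {ω | worstCaseLoss Np θ ζ (x ∘ σ) ω ≤ b} :=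
        measure_mono fun ω hω => (worstCaseValue_mono hNp hθ hx' hσ fun i => hζ i ω).trans hω
    _ = μ {ω | worstCaseLoss Np θ ζ x ω ≤ b} :=
        (identDistrib_worstCaseLoss_comp_perm hNp hθ hmeas hindep hident hζ hx σ).measure_mem_eq
          measurableSet_Iic

theorem cvar_worstCaseLoss_sub_le_of_comp_perm_le (hNp : IsLpNorm Np) (hθ : 0 ≤ θ)
    (hmeas : ∀ i, Measurable (ζ i)) (hindep : iIndepFun ζ μ)
    (hident : ∀ i j, IdentDistrib (ζ i) (ζ j) μ μ) (hζ : ∀ i ω, 0 ≤ ζ i ω)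
    (hint : ∀ i, Integrable (ζ i) μ) {ε : ℝ} (hε0 : 0 < ε) (hε1 : ε ≤ 1) (hx : 0 ≤ x)
    (hx' : 0 ≤ x') (hσ : x ∘ σ ≤ x') (b : ℝ) :
    cvar ε μ (fun ω => worstCaseLoss Np θ ζ x ω - b) ≤
      cvar ε μ (fun ω => worstCaseLoss Np θ ζ x' ω - b) :=
  calc cvar ε μ (fun ω => worstCaseLoss Np θ ζ x ω - b)
      = cvar ε μ (fun ω => worstCaseLoss Np θ ζ (x ∘ σ) ω - b) :=
        ((identDistrib_worstCaseLoss_comp_perm hNp hθ hmeas hindep hident hζ hx σ).comp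
          (measurable_id.sub_const b)).cvar_eq ε |>.symm
    _ ≤ cvar ε μ (fun ω => worstCaseLoss Np θ ζ x' ω - b) :=
        cvar_mono hε0 hε1
          ((integrable_worstCaseLoss hNp hθ hζ hint fun i => hx (σ i)).sub (integrable_const b))
          ((integrable_worstCaseLoss hNp hθ hζ hint hx').sub (integrable_const b))
          fun ω => sub_le_sub_right (worstCaseValue_mono hNp hθ hx' hσ fun i => hζ i ω) b

end WorstCaseLoss

end

theorem alsoxSharp_exact_packing_general
    (n : ℕ)
    (c : Fin n → ℝ) (b₁ : ℝ) (θ : ℝ) (hθ : 0 ≤ θ)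
    (ε : ℝ) (hε : ε ∈ Set.Ioo (0 : ℝ) 1)
    -- the `p`-norm on ℝⁿ for some `p ∈ [1,∞]`
    (Np : (Fin n → ℝ) → ℝ)
    (hNp : (∃ p : ℝ, 1 ≤ p ∧ ∀ ξ, Np ξ = (∑ i, |ξ i| ^ p) ^ (1 / p)) ∨
           (∀ ξ, Np ξ = ⨆ i, |ξ i|))
    -- binary decision set
    (X : Set (Fin n → ℝ)) (hX : ∀ x ∈ X, ∀ i, x i = 0 ∨ x i = 1)
    -- i.i.d. nonnegative integrable random parameters
    {Ω : Type*} [MeasurableSpace Ω] (μ : Measure Ω) [IsProbabilityMeasure μ]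
    (ζ : Fin n → Ω → ℝ)
    (hmeas : ∀ i, Measurable (ζ i))
    (hindep : ProbabilityTheory.iIndepFun ζ μ)
    (hident : ∀ i j, ProbabilityTheory.IdentDistrib (ζ i) (ζ j) μ μ)
    (hnonneg : ∀ i ω, 0 ≤ ζ i ω)
    (hint : ∀ i, Integrable (ζ i) μ)
    -- the type-∞ Wasserstein worst-case value of the packing constraint
    (w : (Fin n → ℝ) → (Fin n → ℝ) → ℝ)
    (hw : ∀ x z, w x z =
      sSup {s | ∃ ξ : Fin n → ℝ, (∀ i, 0 ≤ ξ i) ∧ Np (ξ - z) ≤ θ ∧ s = ∑ i, ξ i * x i})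
    -- feasibility
    (feasible : (Fin n → ℝ) → Prop)
    (hfeas : ∀ x, feasible x ↔ 1 - ε ≤ (μ {ω | w x (fun i => ζ i ω) ≤ b₁}).toReal)
    -- conditional value-at-risk
    (CVaR : (Ω → ℝ) → ℝ)
    (hCVaR : ∀ Z : Ω → ℝ, CVaR Z = ⨅ β : ℝ, (β + ε⁻¹ * ∫ ω, max (Z ω - β) 0 ∂μ))
    -- `v* = cᵀx*` is attained at `x*`
    (xstar : Fin n → ℝ) (hx1 : xstar ∈ X) (hx2 : feasible xstar)
    (hx3 : ∀ x ∈ X, feasible x → ∑ i, c i * xstar i ≤ ∑ i, c i * x i)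
    -- the lower-level objective and feasible set
    (g : (Fin n → ℝ) → ℝ)
    (hg : ∀ x, g x = CVaR (fun ω => w x (fun i => ζ i ω) - b₁))
    (S : Set (Fin n → ℝ))
    (hS : S = {x ∈ X | ∑ i, c i * x i ≤ ∑ i, c i * xstar i})
    -- the lower-level problem attains its minimum
    (hattain : ∃ x ∈ S, IsMinOn g S x) :
    (∃ xhat ∈ S, IsMinOn g S xhat ∧ feasible xhat) ∧
    (∀ xhat ∈ S, IsMinOn g S xhat → feasible xhat →
      ∑ i, c i * xhat i = ∑ i, c i * xstar i) := by
  obtain rfl : w = worstCaseValue Np θ := funext fun x => funext (hw x)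
  obtain rfl : CVaR = cvar ε μ := funext hCVaR
  obtain ⟨hε0, hε1⟩ := hε
  obtain ⟨x₀, hx₀S, hx₀min⟩ := hattain
  subst hS
  have hX0 : ∀ x ∈ X, 0 ≤ x := fun x hx i => by rcases hX x hx i with h | h <;> simp [h]
  refine ⟨?_, fun xh hxh _ hf => le_antisymm hxh.2 (hx3 xh hxh.1 hf)⟩
  rcases le_total #{i | x₀ i = 1} #{i | xstar i = 1} with hcard | hcard
  · obtain ⟨σ, hσ⟩ := exists_perm_comp_le_of_card_le (hX x₀ hx₀S.1) (hX0 xstar hx1) hcard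
    refine ⟨x₀, hx₀S, hx₀min, (hfeas x₀).2 (((hfeas xstar).1 hx2).trans ?_)⟩
    exact ENNReal.toReal_mono (measure_ne_top _ _)
      (measure_worstCaseLoss_le_le_of_comp_perm_le hNp hθ hmeas hindep hident hnonneg
        (hX0 x₀ hx₀S.1) (hX0 xstar hx1) hσ b₁)
  · obtain ⟨σ, hσ⟩ := exists_perm_comp_le_of_card_le (hX xstar hx1) (hX0 x₀ hx₀S.1) hcard
    refine ⟨xstar, ⟨hx1, le_rfl⟩, isMinOn_iff.2 fun y hy => ?_, hx2⟩
    calc g xstar ≤ g x₀ := by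
          rw [hg, hg]
          exact cvar_worstCaseLoss_sub_le_of_comp_perm_le hNp hθ hmeas hindep hident hnonneg
            hint hε0 hε1.le (hX0 xstar hx1) (hX0 x₀ hx₀S.1) hσ b₁
      _ ≤ g y := isMinOn_iff.1 hx₀min y hy

/-- **Exactness of ALSO-X# for single packing DRCCPs with binary decisions and i.i.d.
nonnegative random parameters.**  `Np` is a `p`-norm with `p ∈ [1,∞]`, `w x ζ` is the type-∞
Wasserstein worst-case packing value, and `x` is feasible when `P(w(x,ζ) ≤ b₁) ≥ 1-ε`.
If `v* = cᵀx*` is attained and the lower-level CVaR problem at level `v*` attains its minimum,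
then the lower-level problem has a feasible minimizer, and any feasible minimizer `x̂`
satisfies `cᵀx̂ = v*`. -/
theorem alsoxSharp_exact_packing
    (n : ℕ) (hn : 1 ≤ n)
    (c : Fin n → ℝ) (b₁ : ℝ) (hb₁ : 0 ≤ b₁) (θ : ℝ) (hθ : 0 ≤ θ)
    (ε : ℝ) (hε : ε ∈ Set.Ioo (0 : ℝ) 1)
    -- the `p`-norm on ℝⁿ for some `p ∈ [1,∞]`
    (Np : (Fin n → ℝ) → ℝ)
    (hNp : (∃ p : ℝ, 1 ≤ p ∧ ∀ ξ, Np ξ = (∑ i, |ξ i| ^ p) ^ (1 / p)) ∨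
           (∀ ξ, Np ξ = ⨆ i, |ξ i|))
    -- binary decision set
    (X : Set (Fin n → ℝ)) (hX : ∀ x ∈ X, ∀ i, x i = 0 ∨ x i = 1)
    -- i.i.d. nonnegative integrable random parameters
    {Ω : Type*} [MeasurableSpace Ω] (μ : Measure Ω) [IsProbabilityMeasure μ]
    (ζ : Fin n → Ω → ℝ)
    (hmeas : ∀ i, Measurable (ζ i))
    (hindep : ProbabilityTheory.iIndepFun ζ μ)
    (hident : ∀ i j, ProbabilityTheory.IdentDistrib (ζ i) (ζ j) μ μ)
    (hnonneg : ∀ i ω, 0 ≤ ζ i ω)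
    (hint : ∀ i, Integrable (ζ i) μ)
    -- the type-∞ Wasserstein worst-case value of the packing constraint
    (w : (Fin n → ℝ) → (Fin n → ℝ) → ℝ)
    (hw : ∀ x z, w x z =
      sSup {s | ∃ ξ : Fin n → ℝ, (∀ i, 0 ≤ ξ i) ∧ Np (ξ - z) ≤ θ ∧ s = ∑ i, ξ i * x i})
    -- feasibility
    (feasible : (Fin n → ℝ) → Prop)
    (hfeas : ∀ x, feasible x ↔ 1 - ε ≤ (μ {ω | w x (fun i => ζ i ω) ≤ b₁}).toReal)
    -- conditional value-at-risk
    (CVaR : (Ω → ℝ) → ℝ)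
    (hCVaR : ∀ Z : Ω → ℝ, CVaR Z = ⨅ β : ℝ, (β + ε⁻¹ * ∫ ω, max (Z ω - β) 0 ∂μ))
    -- `v* = cᵀx*` is attained at `x*`
    (xstar : Fin n → ℝ) (hx1 : xstar ∈ X) (hx2 : feasible xstar)
    (hx3 : ∀ x ∈ X, feasible x → ∑ i, c i * xstar i ≤ ∑ i, c i * x i)
    -- the lower-level objective and feasible set
    (g : (Fin n → ℝ) → ℝ)
    (hg : ∀ x, g x = CVaR (fun ω => w x (fun i => ζ i ω) - b₁))
    (S : Set (Fin n → ℝ))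
    (hS : S = {x ∈ X | ∑ i, c i * x i ≤ ∑ i, c i * xstar i})
    -- the lower-level problem attains its minimum
    (hattain : ∃ x ∈ S, IsMinOn g S x) :
    (∃ xhat ∈ S, IsMinOn g S xhat ∧ feasible xhat) ∧
    (∀ xhat ∈ S, IsMinOn g S xhat → feasible xhat →
      ∑ i, c i * xhat i = ∑ i, c i * xstar i) :=
  alsoxSharp_exact_packing_general n c b₁ θ hθ ε hε Np hNp X hX μ ζ hmeas hindep hident hnonneg hint
    w hw feasible hfeas CVaR hCVaR xstar hx1 hx2 hx3 g hg S hS hattain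
end

section
/- Lemma (limit of the regularization term as q → 1⁺ in the type-q hinge-loss reformulation). For q ∈ (1,∞), s ≥ 0 and λ > 0, set P_q(s,λ) := (q−1)·q^{−q/(q−1)}·λ^{−1/(q−1)}·s^{q/(q−1)}. Then, as q → 1 from above, P_q(s,λ) → 0 if s ≤ λ, and P_q(s,λ) → +∞ if s > λ; i.e., the limit is the characteristic function χ_{{s ≤ λ}} taking value 0 when s ≤ λ and +∞ otherwise. -/
open Filter Topology Real

/-! With `t = (q - 1)⁻¹ → ∞` and `r = s / lam`, the regularization term equals
`s * q ^ (-(q / (q - 1))) * (r ^ t / t)`. The middle factor is `(1 - 1 / u) ^ u` with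
`u = q / (q - 1) → ∞`, so it tends to `exp (-1)`, while `r ^ t / t` tends to `0` if `r ≤ 1`
and to `∞` if `r > 1`. -/

theorem tendsto_inv_sub_one_nhdsGT_one :
    Tendsto (fun q : ℝ => (q - 1)⁻¹) (𝓝[>] 1) atTop := by
  refine tendsto_inv_nhdsGT_zero.comp (tendsto_nhdsWithin_of_tendsto_nhds_of_eventually_within _
    (tendsto_sub_nhds_zero_iff.mpr (tendsto_id.mono_left nhdsWithin_le_nhds)) ?_)
  filter_upwards [self_mem_nhdsWithin] with q (hq : 1 < q) using sub_pos.mpr hq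

theorem div_sub_one_eq_one_add_inv {q : ℝ} (hq : q ≠ 1) : q / (q - 1) = 1 + (q - 1)⁻¹ := by
  have : q - 1 ≠ 0 := sub_ne_zero.mpr hq
  field_simp
  ring

theorem tendsto_rpow_neg_div_sub_one_nhdsGT_one :
    Tendsto (fun q : ℝ => q ^ (-(q / (q - 1)))) (𝓝[>] 1) (𝓝 (exp (-1))) := by
  have hu : Tendsto (fun q : ℝ => q / (q - 1)) (𝓝[>] 1) atTop := by
    refine (tendsto_atTop_add_const_left _ 1 tendsto_inv_sub_one_nhdsGT_one).congr' ?_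
    filter_upwards [eventually_mem_nhdsWithin] with q (hq : 1 < q)
    exact (div_sub_one_eq_one_add_inv hq.ne').symm
  refine ((tendsto_one_add_div_rpow_exp (-1)).comp hu).congr' ?_
  filter_upwards [eventually_mem_nhdsWithin] with q (hq : 1 < q)
  have hq0 : 0 < q := by linarith
  have hbase : 1 + -1 / (q / (q - 1)) = q⁻¹ := by
    have hq1 : q - 1 ≠ 0 := by linarith
    field_simp
    ring
  simp only [Function.comp, hbase, inv_rpow hq0.le, rpow_neg hq0.le]

theorem tendsto_rpow_div_self_atTop_of_one_lt {r : ℝ} (hr : 1 < r) :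
    Tendsto (fun x : ℝ => r ^ x / x) atTop atTop := by
  refine (tendsto_exp_mul_div_rpow_atTop 1 (log r) (log_pos hr)).congr' ?_
  filter_upwards [eventually_gt_atTop 0] with x hx
  rw [rpow_one, rpow_def_of_pos (by linarith)]

theorem tendsto_rpow_div_self_atTop_of_le_one {r : ℝ} (hr₀ : 0 ≤ r) (hr₁ : r ≤ 1) :
    Tendsto (fun x : ℝ => r ^ x / x) atTop (𝓝 0) := by
  refine squeeze_zero' ?_ ?_ tendsto_inv_atTop_zero
  · filter_upwards [eventually_gt_atTop 0] with x hx
    positivity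
  · filter_upwards [eventually_gt_atTop 0] with x hx
    rw [div_eq_mul_inv]
    exact mul_le_of_le_one_left (by positivity) (rpow_le_one hr₀ hr₁ hx.le)

noncomputable def regularizationTerm (q s lam : ℝ) : ℝ :=
  (q - 1) * q ^ (-(q / (q - 1))) * lam ^ (-(1 / (q - 1))) * s ^ (q / (q - 1))

theorem regularizationTerm_eq {q s lam : ℝ} (hq : 1 < q) (hs : 0 ≤ s) (hlam : 0 < lam) :
    regularizationTerm q s lam =
      s * q ^ (-(q / (q - 1))) * ((s / lam) ^ (q - 1)⁻¹ / (q - 1)⁻¹) := by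
  have hs_pow : s ^ (q / (q - 1)) = s * s ^ (q - 1)⁻¹ := by
    rw [div_sub_one_eq_one_add_inv hq.ne', rpow_add' hs (by positivity), rpow_one]
  rw [regularizationTerm, hs_pow, one_div, rpow_neg hlam.le, div_rpow hs hlam.le]
  field_simp

/-- **Limit of the regularization term as `q → 1⁺`** in the type-`q` hinge-loss reformulation.
With `P q = (q-1) q^{-q/(q-1)} lam^{-1/(q-1)} s^{q/(q-1)}` for `s ≥ 0`, `lam > 0`:
as `q → 1` from above, `P q → 0` if `s ≤ lam` and `P q → +∞` if `s > lam`, i.e. the limit is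
the characteristic function `χ_{{s ≤ lam}}`. -/
theorem regularization_term_limit_q_to_one
    (s lam : ℝ) (hs : 0 ≤ s) (hlam : 0 < lam)
    (P : ℝ → ℝ)
    (hP : ∀ q : ℝ, P q =
      (q - 1) * q ^ (-(q / (q - 1))) * lam ^ (-(1 / (q - 1))) * s ^ (q / (q - 1))) :
    (s ≤ lam → Tendsto P (nhdsWithin 1 (Set.Ioi 1)) (nhds 0)) ∧
    (lam < s → Tendsto P (nhdsWithin 1 (Set.Ioi 1)) atTop) := by
  have hP_eq : (fun q => s * q ^ (-(q / (q - 1))) * ((s / lam) ^ (q - 1)⁻¹ / (q - 1)⁻¹))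
      =ᶠ[𝓝[>] 1] P := by
    filter_upwards [eventually_mem_nhdsWithin] with q (hq : 1 < q)
    rw [hP q]
    exact (regularizationTerm_eq hq hs hlam).symm
  have h_weight := tendsto_rpow_neg_div_sub_one_nhdsGT_one.const_mul s
  refine ⟨fun hsl => ?_, fun hls => ?_⟩
  · have h_ratio := (tendsto_rpow_div_self_atTop_of_le_one (div_nonneg hs hlam.le)
      ((div_le_one hlam).mpr hsl)).comp tendsto_inv_sub_one_nhdsGT_one
    simpa only [mul_zero] using (h_weight.mul h_ratio).congr' hP_eq
  · have h_ratio := (tendsto_rpow_div_self_atTop_of_one_lt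
      ((one_lt_div hlam).mpr hls)).comp tendsto_inv_sub_one_nhdsGT_one
    exact (h_weight.pos_mul_atTop (mul_pos (hlam.trans hls) (exp_pos _)) h_ratio).congr' hP_eq
end

section
/- Lemma (optimal dual multiplier in the type-q CVaR reformulation). For θ > 0, ε > 0, s > 0 and q ∈ (1,∞), one has inf_{λ > 0} ( λ·θ^q + ε·P_q(s,λ) ) = ε^{(q−1)/q}·θ·s, and the infimum is attained at λ* = ε^{(q−1)/q}·s·q^{−1}·θ^{1−q}. -/
/-!
Scaling pulls `ε` into the penalty: `ε · P_q(s, λ) = P_q(ε^{(q-1)/q} s, λ)`, so it suffices to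
treat `ε = 1`. Young's inequality with the conjugate exponents `q` and `q/(q-1)`, applied to
`(qλ)^{1/q} θ` and `(qλ)^{-1/q} b`, gives `θ b ≤ λ θ^q + P_q(b, λ)` for every `λ > 0`, with
equality at `λ = b q⁻¹ θ^{1-q}`.
-/

open Real

noncomputable def dualPenalty (q b lam : ℝ) : ℝ :=
  (q - 1) * q ^ (-(q / (q - 1))) * lam ^ (-(1 / (q - 1))) * b ^ (q / (q - 1))

section
variable {q a b lam : ℝ}

theorem mul_dualPenalty {ε : ℝ} (hq : 1 < q) (hε : 0 ≤ ε) (hb : 0 ≤ b) :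
    ε * dualPenalty q b lam = dualPenalty q (ε ^ ((q - 1) / q) * b) lam := by
  have hq1 : q - 1 ≠ 0 := by linarith
  have hexp : (q - 1) / q * (q / (q - 1)) = 1 := by field_simp
  rw [dualPenalty, dualPenalty, mul_rpow (by positivity) hb, ← rpow_mul hε, hexp, rpow_one]
  ring

theorem mul_le_add_dualPenalty (hq : 1 < q) (ha : 0 ≤ a) (hb : 0 ≤ b) (hlam : 0 < lam) :
    a * b ≤ lam * a ^ q + dualPenalty q b lam := by
  have hq0 : 0 < q := by linarith
  have hq1 : 0 < q - 1 := by linarith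
  have hc : 0 < q * lam := by positivity
  have young := young_inequality_of_nonneg
    (mul_nonneg (rpow_nonneg hc.le (1 / q)) ha) (mul_nonneg (rpow_nonneg hc.le (-(1 / q))) hb)
    ((holderConjugate_iff_eq_conjExponent hq).2 rfl)
  convert young using 1
  · rw [mul_mul_mul_comm, ← rpow_add hc, add_neg_cancel, rpow_zero, one_mul]
  · congr 1
    · rw [mul_rpow (by positivity) ha, ← rpow_mul hc.le, one_div_mul_cancel hq0.ne', rpow_one]
      field_simp
    · rw [mul_rpow (by positivity) hb, ← rpow_mul hc.le, mul_rpow hq0.le hlam.le, dualPenalty]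
      have hlamExp : -(1 / q) * (q / (q - 1)) = -(1 / (q - 1)) := by field_simp
      have hqPow : q ^ (-(q / (q - 1))) = q ^ (-(1 / (q - 1))) / q := by
        rw [eq_div_iff hq0.ne', ← rpow_add_one hq0.ne']
        congr 1
        field_simp
        ring
      rw [hlamExp, hqPow]
      field_simp

theorem dualPenalty_at_optimum (hq : 1 < q) (ha : 0 < a) (hb : 0 < b) :
    dualPenalty q b (b * q⁻¹ * a ^ (1 - q)) = (q - 1) / q * (a * b) := by
  have hq0 : 0 < q := by linarith
  have hq1 : 0 < q - 1 := by linarith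
  refine log_injOn_pos (Set.mem_Ioi.2 ?_) (Set.mem_Ioi.2 (by positivity)) ?_
  · unfold dualPenalty; positivity
  simp (disch := positivity) only [dualPenalty, log_mul, log_rpow, log_inv, log_div]
  field_simp
  ring

theorem add_dualPenalty_at_optimum (hq : 1 < q) (ha : 0 < a) (hb : 0 < b) :
    b * q⁻¹ * a ^ (1 - q) * a ^ q + dualPenalty q b (b * q⁻¹ * a ^ (1 - q)) = a * b := by
  rw [dualPenalty_at_optimum hq ha hb, mul_assoc _ (a ^ (1 - q)), ← rpow_add ha, sub_add_cancel,
    rpow_one]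
  field_simp
  ring

theorem isLeast_add_dualPenalty (hq : 1 < q) (ha : 0 < a) (hb : 0 < b) :
    IsLeast {v | ∃ lam, 0 < lam ∧ v = lam * a ^ q + dualPenalty q b lam} (a * b) :=
  ⟨⟨_, by positivity, (add_dualPenalty_at_optimum hq ha hb).symm⟩,
    fun _ ⟨_, hlam, hv⟩ => hv ▸ mul_le_add_dualPenalty hq ha.le hb.le hlam⟩

end

/-- **Optimal dual multiplier in the type-`q` CVaR reformulation.**
For `θ > 0`, `ε > 0`, `s > 0`, `q ∈ (1,∞)` and
`Pq lam = (q-1) q^{-q/(q-1)} lam^{-1/(q-1)} s^{q/(q-1)}`: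
`inf_{lam > 0} (lam θ^q + ε Pq(lam)) = ε^{(q-1)/q} θ s`, attained at
`lam* = ε^{(q-1)/q} s q⁻¹ θ^{1-q}`. -/
theorem optimal_dual_multiplier_q_cvar
    (θ ε s q : ℝ) (hθ : 0 < θ) (hε : 0 < ε) (hs : 0 < s) (hq : 1 < q)
    (Pq : ℝ → ℝ)
    (hPq : ∀ lam : ℝ, Pq lam =
      (q - 1) * q ^ (-(q / (q - 1))) * lam ^ (-(1 / (q - 1))) * s ^ (q / (q - 1))) :
    sInf {v : ℝ | ∃ lam : ℝ, 0 < lam ∧ v = lam * θ ^ q + ε * Pq lam}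
        = ε ^ ((q - 1) / q) * θ * s ∧
    0 < ε ^ ((q - 1) / q) * s * q⁻¹ * θ ^ (1 - q) ∧
    (ε ^ ((q - 1) / q) * s * q⁻¹ * θ ^ (1 - q)) * θ ^ q +
        ε * Pq (ε ^ ((q - 1) / q) * s * q⁻¹ * θ ^ (1 - q))
      = ε ^ ((q - 1) / q) * θ * s := by
  obtain rfl : Pq = dualPenalty q s := funext hPq
  have hb : 0 < ε ^ ((q - 1) / q) * s := by positivity
  have hab : θ * (ε ^ ((q - 1) / q) * s) = ε ^ ((q - 1) / q) * θ * s := by ring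
  simp only [mul_dualPenalty hq hε.le hs.le, ← hab]
  exact ⟨(isLeast_add_dualPenalty hq hθ hb).csInf_eq, by positivity,
    add_dualPenalty_at_optimum hq hθ hb⟩
end

section
/- Proposition (simplified CVaR approximation under the type-q Wasserstein ambiguity set when all dual norms coincide). The following are equivalent: (a) there exist λ > 0 and β ≤ 0 such that ε·β + λ·θ^q + E[( max_{i∈[I]}( W_i + P_q(s,λ) ) − β )₊] ≤ 0; (b) θ·ε^{−1/q}·s + CVaR_{1−ε}(W) ≤ 0. -/
/-!
For fixed `λ > 0` the shift `Pq λ` moves out of the maximum, so substituting `β ↦ β - Pq λ` turns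
condition (a) into `ε · (β + ε⁻¹ E[(W - β)₊]) + (ε Pq λ + λ θ^q) ≤ 0`. By the weighted AM–GM
(Young) inequality, `λ ↦ ε Pq λ + λ θ^q` has minimum `ε · θ ε^{-1/q} s` on `λ > 0`, and the
Rockafellar–Uryasev function `β ↦ β + ε⁻¹ E[(W - β)₊]` attains its infimum `CVaR_{1-ε}(W)` since it
is continuous and coercive for `ε < 1`. Minimizing over `λ` and `β` gives (b); the minimizers
witness (a), the sign condition `β ≤ 0` coming from `β ≤ CVaR_{1-ε}(W) ≤ -θ ε^{-1/q} s`.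
-/

open MeasureTheory Filter Set Real

noncomputable def wassersteinPenalty (q s lam : ℝ) : ℝ :=
  (q - 1) * q ^ (-(q / (q - 1))) * lam ^ (-(1 / (q - 1))) * s ^ (q / (q - 1))

section WassersteinPenalty

variable {q ε θ s lam : ℝ}

lemma exists_exp_eq_of_pos {x : ℝ} (hx : 0 < x) : ∃ a, exp a = x := ⟨log x, exp_log hx⟩

lemma arith_mean_wassersteinPenalty_terms (hq : 1 < q) :
    1 / q * (q * lam * θ ^ q) +
        (q - 1) / q * (ε * q ^ (-(1 / (q - 1))) * lam ^ (-(1 / (q - 1))) * s ^ (q / (q - 1))) =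
      ε * wassersteinPenalty q s lam + lam * θ ^ q := by
  have hq0 : q ≠ 0 := by positivity
  have hq1 : q - 1 ≠ 0 := by linarith
  have : -(q / (q - 1)) = -(1 / (q - 1)) - 1 := by field_simp; ring
  rw [wassersteinPenalty, this, rpow_sub_one hq0]
  field_simp
  ring

/- The next two lemmas are identities between monomials in `q, ε, θ, s, λ`: writing each of these
positive variables as an exponential turns them into linear identities between exponents. -/

lemma geom_mean_wassersteinPenalty_terms (hq : 1 < q) (hε : 0 < ε) (hθ : 0 < θ) (hs : 0 < s)
    (hlam : 0 < lam) :
    (q * lam * θ ^ q) ^ (1 / q) *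
        (ε * q ^ (-(1 / (q - 1))) * lam ^ (-(1 / (q - 1))) * s ^ (q / (q - 1))) ^ ((q - 1) / q) =
      ε * (θ * ε ^ (-(1 / q)) * s) := by
  obtain ⟨Q, rfl⟩ := exists_exp_eq_of_pos (one_pos.trans hq)
  obtain ⟨a, rfl⟩ := exists_exp_eq_of_pos hε
  obtain ⟨b, rfl⟩ := exists_exp_eq_of_pos hθ
  obtain ⟨c, rfl⟩ := exists_exp_eq_of_pos hs
  obtain ⟨l, rfl⟩ := exists_exp_eq_of_pos hlam
  have : exp Q - 1 ≠ 0 := by linarith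
  simp only [← exp_mul, ← exp_add]
  rw [exp_eq_exp]
  field_simp
  ring

/-- The multiplier `λ₀ = ε^{(q-1)/q} s θ^{1-q} / q` is where the two terms of the AM–GM
inequality coincide. -/
lemma wassersteinPenalty_optimal_multiplier (hq : 1 < q) (hε : 0 < ε) (hθ : 0 < θ) (hs : 0 < s) :
    wassersteinPenalty q s (ε ^ ((q - 1) / q) * s * θ ^ (1 - q) / q) =
        (q - 1) * (θ * ε ^ (-(1 / q)) * s / q) ∧
      ε ^ ((q - 1) / q) * s * θ ^ (1 - q) / q * θ ^ q = ε * (θ * ε ^ (-(1 / q)) * s) / q := by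
  obtain ⟨Q, rfl⟩ := exists_exp_eq_of_pos (one_pos.trans hq)
  obtain ⟨a, rfl⟩ := exists_exp_eq_of_pos hε
  obtain ⟨b, rfl⟩ := exists_exp_eq_of_pos hθ
  obtain ⟨c, rfl⟩ := exists_exp_eq_of_pos hs
  have : exp Q - 1 ≠ 0 := by linarith
  rw [wassersteinPenalty, mul_assoc, mul_assoc]
  refine ⟨congrArg ((exp Q - 1) * ·) ?_, ?_⟩ <;>
  · simp only [← exp_mul, ← exp_add, ← exp_sub]
    rw [exp_eq_exp]
    field_simp
    ring

theorem isLeast_mul_wassersteinPenalty_add (hq : 1 < q) (hε : 0 < ε) (hθ : 0 < θ) (hs : 0 < s) :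
    IsLeast ((fun lam ↦ ε * wassersteinPenalty q s lam + lam * θ ^ q) '' Ioi 0)
      (ε * (θ * ε ^ (-(1 / q)) * s)) := by
  have hq0 : 0 < q := one_pos.trans hq
  obtain ⟨hpenalty, hcost⟩ := wassersteinPenalty_optimal_multiplier hq hε hθ hs
  refine ⟨⟨ε ^ ((q - 1) / q) * s * θ ^ (1 - q) / q, mem_Ioi.2 (by positivity), ?_⟩, ?_⟩
  · simp only [hpenalty, hcost]
    field_simp
    ring
  · rintro _ ⟨lam, hlam : 0 < lam, rfl⟩
    dsimp only
    rw [← geom_mean_wassersteinPenalty_terms hq hε hθ hs hlam,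
      ← arith_mean_wassersteinPenalty_terms hq]
    exact geom_mean_le_arith_mean2_weighted (by positivity) (div_nonneg (by linarith) hq0.le)
      (by positivity) (by positivity) (by field_simp; ring)

end WassersteinPenalty

section CVaR

variable {Ω : Type*} [MeasurableSpace Ω] {μ : Measure Ω} {X : Ω → ℝ} {ε : ℝ}

theorem MeasureTheory.Integrable.iSup {ι : Type*} [Fintype ι] [Nonempty ι] {W : ι → Ω → ℝ}
    (hW : ∀ i, Integrable (W i) μ) : Integrable (fun ω ↦ ⨆ i, W i ω) μ := by
  have hsup : Integrable (Finset.univ.sup' Finset.univ_nonempty W) μ :=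
    Finset.sup'_induction (p := (Integrable · μ)) _ _ (fun _ h₁ _ h₂ ↦ h₁.sup h₂) fun i _ ↦ hW i
  convert hsup using 1
  ext ω
  rw [Finset.sup'_apply, Finset.sup'_univ_eq_ciSup]

lemma integrable_max_sub [IsFiniteMeasure μ] (hX : Integrable X μ) (β : ℝ) :
    Integrable (fun ω ↦ max (X ω - β) 0) μ :=
  (hX.sub (integrable_const β)).sup (integrable_const 0)

lemma lipschitzWith_integral_max_sub [IsProbabilityMeasure μ] (hX : Integrable X μ) :
    LipschitzWith 1 fun β ↦ ∫ ω, max (X ω - β) 0 ∂μ := by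
  have hint := integrable_max_sub hX
  refine LipschitzWith.of_dist_le_mul fun β γ ↦ ?_
  rw [dist_eq_norm, ← integral_sub (hint β) (hint γ), NNReal.coe_one, one_mul]
  calc ‖∫ ω, (max (X ω - β) 0 - max (X ω - γ) 0) ∂μ‖ ≤ dist β γ * μ.real univ :=
        norm_integral_le_of_norm_le_const <| ae_of_all _ fun ω ↦ by
          rw [Real.norm_eq_abs, dist_comm, Real.dist_eq]
          exact (abs_max_sub_max_le_abs _ _ _).trans_eq (by ring_nf)
    _ = dist β γ := by simp

noncomputable def cvarObjective (μ : Measure Ω) (ε : ℝ) (X : Ω → ℝ) (β : ℝ) : ℝ :=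
  β + ε⁻¹ * ∫ ω, max (X ω - β) 0 ∂μ

lemma self_le_cvarObjective (hε : 0 < ε) (β : ℝ) : β ≤ cvarObjective μ ε X β :=
  le_add_of_nonneg_right <| mul_nonneg (inv_nonneg.2 hε.le) <|
    integral_nonneg fun _ ↦ le_max_right _ _

lemma inv_mul_integral_add_le_cvarObjective [IsProbabilityMeasure μ] (hε : 0 < ε)
    (hX : Integrable X μ) (β : ℝ) :
    ε⁻¹ * ∫ ω, X ω ∂μ + (1 - ε⁻¹) * β ≤ cvarObjective μ ε X β := by
  have hmean : ∫ ω, X ω ∂μ - β ≤ ∫ ω, max (X ω - β) 0 ∂μ :=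
    calc ∫ ω, X ω ∂μ - β = ∫ ω, (X ω - β) ∂μ := by simp [integral_sub hX (integrable_const β)]
      _ ≤ ∫ ω, max (X ω - β) 0 ∂μ :=
        integral_mono (hX.sub (integrable_const β)) (integrable_max_sub hX β)
          fun _ ↦ le_max_left _ _
  rw [cvarObjective]
  nlinarith [mul_le_mul_of_nonneg_left hmean (inv_nonneg.2 hε.le)]

theorem tendsto_cvarObjective_cocompact [IsProbabilityMeasure μ] (hε : ε ∈ Ioo 0 1)
    (hX : Integrable X μ) : Tendsto (cvarObjective μ ε X) (cocompact ℝ) atTop := by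
  rw [cocompact_eq_atBot_atTop, tendsto_sup]
  refine ⟨tendsto_atTop_mono (inv_mul_integral_add_le_cvarObjective hε.1 hX) ?_,
    tendsto_atTop_mono (self_le_cvarObjective hε.1) tendsto_id⟩
  have : 1 - ε⁻¹ < 0 := sub_neg.2 <| one_lt_inv_iff₀.2 hε
  exact tendsto_atTop_add_const_left _ _ (tendsto_id.const_mul_atBot_of_neg this)

theorem isLeast_ciInf_cvarObjective [IsProbabilityMeasure μ] (hε : ε ∈ Ioo 0 1)
    (hX : Integrable X μ) :
    IsLeast (range (cvarObjective μ ε X)) (⨅ β, cvarObjective μ ε X β) := by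
  have hcont : Continuous (cvarObjective μ ε X) :=
    continuous_id.add (continuous_const.mul (lipschitzWith_integral_max_sub hX).continuous)
  obtain ⟨β₀, hβ₀⟩ := hcont.exists_forall_le (tendsto_cvarObjective_cocompact hε hX)
  have hleast : IsLeast (range (cvarObjective μ ε X)) (cvarObjective μ ε X β₀) :=
    ⟨mem_range_self β₀, forall_mem_range.2 hβ₀⟩
  rwa [hleast.isGLB.ciInf_eq]

end CVaR

/-- **Simplified CVaR approximation under the type-`q` Wasserstein ambiguity set when all dual
norms coincide.**  With `W = max_i W_i` and
`Pq lam = (q-1) q^{-q/(q-1)} lam^{-1/(q-1)} s^{q/(q-1)}`, the following are equivalent: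
(a) `∃ lam > 0, ∃ β ≤ 0, ε β + lam θ^q + E[(max_i (W_i + Pq lam) − β)₊] ≤ 0`;
(b) `θ ε^{-1/q} s + CVaR_{1-ε}(W) ≤ 0`. -/
theorem cvar_q_simplified_equivalence
    (ε θ q s : ℝ) (hε : ε ∈ Set.Ioo (0 : ℝ) 1) (hθ : 0 < θ) (hq : 1 < q) (hs : 0 < s)
    (I : ℕ) (hI : 1 ≤ I)
    {Ω : Type*} [MeasurableSpace Ω] (μ : Measure Ω) [IsProbabilityMeasure μ]
    (W : Fin I → Ω → ℝ) (hW : ∀ i, Integrable (W i) μ)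
    (Pq : ℝ → ℝ)
    (hPq : ∀ lam : ℝ, Pq lam =
      (q - 1) * q ^ (-(q / (q - 1))) * lam ^ (-(1 / (q - 1))) * s ^ (q / (q - 1))) :
    ((∃ lam > (0 : ℝ), ∃ β ≤ (0 : ℝ),
        ε * β + lam * θ ^ q +
          ∫ ω, max ((⨆ i : Fin I, (W i ω + Pq lam)) - β) 0 ∂μ ≤ 0) ↔
      θ * ε ^ (-(1 / q)) * s +
          (⨅ β : ℝ, (β + ε⁻¹ * ∫ ω, max ((⨆ i : Fin I, W i ω) - β) 0 ∂μ)) ≤ 0) := by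
  have hε0 : 0 < ε := hε.1
  have : Nonempty (Fin I) := ⟨⟨0, hI⟩⟩
  obtain rfl : Pq = wassersteinPenalty q s := funext hPq
  set K := θ * ε ^ (-(1 / q)) * s
  set g := cvarObjective μ ε fun ω ↦ ⨆ i, W i ω
  obtain ⟨⟨β₀, hβ₀⟩, hβ₀_le⟩ := isLeast_ciInf_cvarObjective hε (Integrable.iSup hW)
  obtain ⟨⟨lam₀, hlam₀ : 0 < lam₀, hlam₀_eq⟩, hyoung⟩ :=
    isLeast_mul_wassersteinPenalty_add hq hε0 hθ hs
  replace hlam₀_eq : ε * wassersteinPenalty q s lam₀ + lam₀ * θ ^ q = ε * K := hlam₀_eq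
  have hsplit : ∀ lam β, ε * β + lam * θ ^ q +
      ∫ ω, max ((⨆ i, (W i ω + wassersteinPenalty q s lam)) - β) 0 ∂μ =
        ε * g (β - wassersteinPenalty q s lam) +
          (ε * wassersteinPenalty q s lam + lam * θ ^ q) := by
    intro lam β
    simp only [g, cvarObjective, ← ciSup_add (finite_range _).bddAbove, sub_sub_eq_add_sub]
    field_simp
    ring
  change _ ↔ K + ⨅ β, g β ≤ 0
  rw [← hβ₀]
  constructor
  · rintro ⟨lam, hlam, β, -, h⟩
    have hK := hyoung ⟨lam, hlam, rfl⟩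
    have hmin := hβ₀_le ⟨β - wassersteinPenalty q s lam, rfl⟩
    rw [hsplit] at h
    refine nonpos_of_mul_nonpos_right ?_ hε0
    nlinarith
  · intro h
    have hpenalty : wassersteinPenalty q s lam₀ ≤ K := by
      have : 0 ≤ lam₀ * θ ^ q := by positivity
      nlinarith
    refine ⟨lam₀, hlam₀, β₀ + wassersteinPenalty q s lam₀, ?_, ?_⟩
    · linarith [(self_le_cvarObjective hε0 β₀ : β₀ ≤ g β₀)]
    · rw [hsplit, add_sub_cancel_right, hlam₀_eq]
      nlinarith
end

section
/- Lemma (closed form of the type-∞ Wasserstein worst-case packing value for binary decisions). Let n ≥ 1, θ ≥ 0, p ∈ [1,∞), ζ ∈ ℝ₊ⁿ, and x ∈ {0,1}ⁿ with ℓ := Σ_{i∈[n]} x_i ≥ 1. Then sup{ Σ_{i∈[n]} ξ_i x_i : ξ ∈ ℝ₊ⁿ, ‖ξ − ζ‖_p ≤ θ } = Σ_{i∈[n]} ζ_i x_i + θ·ℓ^{(p−1)/p}, and the supremum is attained. -/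
/-- **Closed form of the type-∞ Wasserstein worst-case packing value for binary decisions.**
For `θ ≥ 0`, `p ∈ [1,∞)`, `ζ ∈ ℝ₊ⁿ` and binary `x` with `ℓ = Σᵢ xᵢ ≥ 1`,
`sup{Σᵢ ξᵢ xᵢ : ξ ∈ ℝ₊ⁿ, ‖ξ - ζ‖_p ≤ θ} = Σᵢ ζᵢ xᵢ + θ ℓ^{(p-1)/p}` and the supremum is
attained. -/
theorem packing_worst_case_closed_form
    (n : ℕ) (hn : 1 ≤ n) (θ : ℝ) (hθ : 0 ≤ θ) (p : ℝ) (hp : 1 ≤ p)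
    (ζ : Fin n → ℝ) (hζ : ∀ i, 0 ≤ ζ i)
    (x : Fin n → ℝ) (hx : ∀ i, x i = 0 ∨ x i = 1)
    (ℓ : ℝ) (hℓ : ℓ = ∑ i, x i) (hℓ1 : 1 ≤ ℓ) :
    IsGreatest
      {s : ℝ | ∃ ξ : Fin n → ℝ, (∀ i, 0 ≤ ξ i) ∧
        (∑ i, |ξ i - ζ i| ^ p) ^ (1 / p) ≤ θ ∧ s = ∑ i, ξ i * x i}
      (∑ i, ζ i * x i + θ * ℓ ^ ((p - 1) / p)) ∧
    sSup {s : ℝ | ∃ ξ : Fin n → ℝ, (∀ i, 0 ≤ ξ i) ∧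
        (∑ i, |ξ i - ζ i| ^ p) ^ (1 / p) ≤ θ ∧ s = ∑ i, ξ i * x i}
      = ∑ i, ζ i * x i + θ * ℓ ^ ((p - 1) / p) := by
  have hℓpos : (0:ℝ) < ℓ := lt_of_lt_of_le one_pos hℓ1
  have hppos : (0:ℝ) < p := lt_of_lt_of_le one_pos hp
  have hpne : p ≠ 0 := hppos.ne'
  have hx0 : ∀ i, 0 ≤ x i := by
    intro i; rcases hx i with h | h <;> simp [h]
  set lam : ℝ := θ * ℓ ^ (-(1/p)) with hlam
  have hlam0 : 0 ≤ lam := mul_nonneg hθ (Real.rpow_nonneg hℓpos.le _)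
  -- membership
  have hmem : (∑ i, ζ i * x i + θ * ℓ ^ ((p - 1) / p)) ∈
      {s : ℝ | ∃ ξ : Fin n → ℝ, (∀ i, 0 ≤ ξ i) ∧
        (∑ i, |ξ i - ζ i| ^ p) ^ (1 / p) ≤ θ ∧ s = ∑ i, ξ i * x i} := by
    refine ⟨fun i => ζ i + lam * x i, fun i => add_nonneg (hζ i) (mul_nonneg hlam0 (hx0 i)), ?_, ?_⟩
    · have hterm : ∀ i : Fin n, |ζ i + lam * x i - ζ i| ^ p = lam ^ p * x i := by
        intro i
        rcases hx i with h | h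
        · simp [h, Real.zero_rpow hpne]
        · simp [h, abs_of_nonneg hlam0]
      rw [Finset.sum_congr rfl (fun i _ => hterm i), ← Finset.mul_sum, ← hℓ]
      have hlamp : lam ^ p * ℓ = θ ^ p := by
        rw [hlam, Real.mul_rpow hθ (Real.rpow_nonneg hℓpos.le _),
          ← Real.rpow_mul hℓpos.le]
        have h1 : -(1/p) * p = -1 := by field_simp
        rw [h1, Real.rpow_neg_one, mul_assoc, inv_mul_cancel₀ hℓpos.ne', mul_one]
      rw [hlamp, ← Real.rpow_mul hθ, mul_one_div_cancel hpne, Real.rpow_one]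
    · have hterm : ∀ i : Fin n, (ζ i + lam * x i) * x i = ζ i * x i + lam * x i := by
        intro i
        rcases hx i with h | h <;> simp [h] <;> ring
      rw [Finset.sum_congr rfl (fun i _ => hterm i), Finset.sum_add_distrib, ← Finset.mul_sum, ← hℓ]
      congr 1
      have hle : ℓ ^ (-(1/p)) * ℓ = ℓ ^ ((p - 1) / p) := by
        nth_rewrite 2 [← Real.rpow_one ℓ]
        rw [← Real.rpow_add hℓpos]
        congr 1
        field_simp
        ring
      rw [hlam, mul_assoc, hle]
  -- upper bound
  have hub : ∀ s ∈ {s : ℝ | ∃ ξ : Fin n → ℝ, (∀ i, 0 ≤ ξ i) ∧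
        (∑ i, |ξ i - ζ i| ^ p) ^ (1 / p) ≤ θ ∧ s = ∑ i, ξ i * x i},
      s ≤ ∑ i, ζ i * x i + θ * ℓ ^ ((p - 1) / p) := by
    rintro s ⟨ξ, hξ0, hξθ, rfl⟩
    have key : ∑ i, (ξ i - ζ i) * x i ≤ θ * ℓ ^ ((p - 1) / p) := by
      rcases eq_or_lt_of_le hp with hp1 | hp1
      · -- p = 1
        have hθ' : ∑ i, |ξ i - ζ i| ≤ θ := by
          have := hξθ
          rw [← hp1] at this
          simpa [Real.rpow_one] using this
        have h1 : ∑ i, (ξ i - ζ i) * x i ≤ ∑ i, |ξ i - ζ i| := by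
          apply Finset.sum_le_sum
          intro i _
          rcases hx i with h | h
          · simp [h, abs_nonneg]
          · simp [h, le_abs_self]
        have h2 : ((p - 1) / p : ℝ) = 0 := by rw [← hp1]; norm_num
        rw [h2, Real.rpow_zero, mul_one]
        exact h1.trans hθ'
      · -- p > 1
        have hpq : p.HolderConjugate (p / (p - 1)) := Real.HolderConjugate.conjExponent hp1
        have hq1 : 1 / (p / (p - 1)) = (p - 1) / p := by
          rw [one_div_div]
        have hxq : ∑ i, |x i| ^ (p / (p - 1)) = ℓ := by
          rw [hℓ]
          apply Finset.sum_congr rfl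
          intro i _
          rcases hx i with h | h
          · simp [h, Real.zero_rpow hpq.symm.ne_zero]
          · simp [h]
        have hold := Real.inner_le_Lp_mul_Lq Finset.univ (fun i => ξ i - ζ i) x hpq
        rw [hxq, hq1] at hold
        refine hold.trans ?_
        exact mul_le_mul_of_nonneg_right hξθ (Real.rpow_nonneg hℓpos.le _)
    have heq : ∑ i, ξ i * x i = ∑ i, ζ i * x i + ∑ i, (ξ i - ζ i) * x i := by
      rw [← Finset.sum_add_distrib]
      apply Finset.sum_congr rfl
      intro i _; ring
    rw [heq]
    linarith
  have hgreat : IsGreatest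
      {s : ℝ | ∃ ξ : Fin n → ℝ, (∀ i, 0 ≤ ξ i) ∧
        (∑ i, |ξ i - ζ i| ^ p) ^ (1 / p) ≤ θ ∧ s = ∑ i, ξ i * x i}
      (∑ i, ζ i * x i + θ * ℓ ^ ((p - 1) / p)) := ⟨hmem, hub⟩
  exact ⟨hgreat, hgreat.csSup_eq⟩
end

section
/- Lemma (Hessian of the p-norm away from the coordinate hyperplanes, the key computation in the uniqueness proofs for the lower-level ALSO-X). Let p ∈ (1,∞), n ≥ 1, and let x ∈ ℝⁿ have all coordinates nonzero. Then the map y ↦ ‖y‖_p is twice continuously differentiable in a neighborhood of x, and its Hessian at x equals H(x) = (p−1)·( Σ_{j∈[n]} |x_j|^p )^{1/p − 2} · [ ( Σ_{j∈[n]} |x_j|^p ) · diag(|x_1|^{p−2}, …, |x_n|^{p−2}) − v·vᵀ ], where v_i = sign(x_i)·|x_i|^{p−1}. Moreover H(x) is positive semidefinite, and for y ∈ ℝⁿ one has yᵀH(x)y = 0 if and only if y is a scalar multiple of x (so H(x) has rank n−1 when n ≥ 2). -/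
/-!
Write `S = ∑ⱼ |xⱼ|^p` and `wᵢ = |xᵢ|^(p-2)`, so that `sign(xᵢ)|xᵢ|^(p-1) = wᵢ xᵢ` and
`S = ∑ᵢ wᵢ xᵢ²`. Away from the coordinate hyperplanes every `|yⱼ|^p` is smooth, so the `p`-norm is
smooth there, its gradient at `y` is `(∑ₖ |yₖ|^p)^(1/p-1) (|yⱼ|^(p-2) yⱼ)ⱼ`, and differentiating
once more at `x` gives `H = (p-1) S^(1/p-2) [S diag(w) - (w x)(w x)ᵀ]`. The bracket is the matrix of the Cauchy–Schwarz gap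
`⟨x,x⟩_w ⟨y,y⟩_w - ⟨x,y⟩_w²` for the weighted inner product `⟨a,b⟩_w = ∑ wᵢ aᵢ bᵢ`, which by
Lagrange's identity equals `½ ∑ᵢⱼ wᵢ wⱼ (xᵢ yⱼ - xⱼ yᵢ)²`. Since all `wᵢ > 0`, this is nonnegative
and vanishes exactly on `ℝ x`, which is therefore the kernel of `H`; hence `rank H = n - 1`.
-/

theorem exists_eq_smul_iff_forall_mul_eq {ι K : Type*} [Field K] {x : ι → K} (hx : x ≠ 0)
    (y : ι → K) : (∃ t : K, y = t • x) ↔ ∀ i j, x i * y j = x j * y i := by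
  constructor
  · rintro ⟨t, rfl⟩ i j
    simp only [Pi.smul_apply, smul_eq_mul]
    ring
  · intro h
    obtain ⟨i, hi⟩ := Function.ne_iff.1 hx
    refine ⟨y i / x i, funext fun j => ?_⟩
    rw [Pi.smul_apply, smul_eq_mul, div_mul_eq_mul_div, eq_div_iff hi, mul_comm, h i j,
      mul_comm]

section CauchySchwarzMatrix

open Matrix

variable {ι : Type*} [Fintype ι]

theorem sum_sum_mul_mul_eq_dotProduct_mulVec {R : Type*} [CommRing R] (A : Matrix ι ι R)
    (y z : ι → R) : ∑ i, ∑ j, y i * A i j * z j = y ⬝ᵥ A *ᵥ z := by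
  simp only [dotProduct, mulVec, Finset.mul_sum, mul_assoc]

theorem lagrange_identity {R : Type*} [CommRing R] (w a b : ι → R) :
    2 * ((∑ i, w i * a i ^ 2) * (∑ i, w i * b i ^ 2) - (∑ i, w i * a i * b i) ^ 2) =
      ∑ i, ∑ j, w i * w j * (a i * b j - a j * b i) ^ 2 := by
  have hterm : ∀ i j, w i * w j * (a i * b j - a j * b i) ^ 2 =
      w i * a i ^ 2 * (w j * b j ^ 2) + w j * a j ^ 2 * (w i * b i ^ 2) -
        2 * (w i * a i * b i * (w j * a j * b j)) := fun i j => by ring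
  simp only [hterm, Finset.sum_sub_distrib, Finset.sum_add_distrib, ← Finset.mul_sum,
    ← Finset.sum_mul]
  ring

variable [DecidableEq ι]

noncomputable def cauchySchwarzMatrix (w x : ι → ℝ) : Matrix ι ι ℝ :=
  (∑ k, w k * x k ^ 2) • diagonal w - vecMulVec (w * x) (w * x)

theorem vecMul_cauchySchwarzMatrix (w x y : ι → ℝ) (j : ι) :
    (y ᵥ* cauchySchwarzMatrix w x) j =
      (∑ k, w k * x k ^ 2) * (y j * w j) - (∑ i, w i * x i * y i) * (w j * x j) := by
  simp only [cauchySchwarzMatrix, vecMul_sub, vecMul_smul, vecMul_diagonal, vecMul_vecMulVec,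
    Pi.sub_apply, Pi.smul_apply, smul_eq_mul, dotProduct, Pi.mul_apply]
  congr 2
  exact Finset.sum_congr rfl fun i _ => by ring

theorem cauchySchwarzMatrix_isHermitian (w x : ι → ℝ) :
    (cauchySchwarzMatrix w x).IsHermitian := by
  ext i j
  by_cases h : i = j
  · subst h; rfl
  · simp [cauchySchwarzMatrix, vecMulVec_apply, h, Ne.symm h, mul_comm]

theorem dotProduct_cauchySchwarzMatrix_mulVec (w x y : ι → ℝ) :
    y ⬝ᵥ cauchySchwarzMatrix w x *ᵥ y =
      (∑ i, w i * x i ^ 2) * (∑ i, w i * y i ^ 2) - (∑ i, w i * x i * y i) ^ 2 := by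
  calc y ⬝ᵥ cauchySchwarzMatrix w x *ᵥ y
      = ∑ j, ((∑ k, w k * x k ^ 2) * (w j * y j ^ 2) -
          (∑ i, w i * x i * y i) * (w j * x j * y j)) := by
        rw [dotProduct_mulVec, dotProduct]
        exact Finset.sum_congr rfl fun j _ => by rw [vecMul_cauchySchwarzMatrix]; ring
    _ = _ := by rw [Finset.sum_sub_distrib, ← Finset.mul_sum, ← Finset.mul_sum, sq]

theorem cauchySchwarzMatrix_posSemidef {w : ι → ℝ} (hw : ∀ i, 0 ≤ w i) (x : ι → ℝ) :
    (cauchySchwarzMatrix w x).PosSemidef := by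
  refine .of_dotProduct_mulVec_nonneg (cauchySchwarzMatrix_isHermitian w x) fun y => ?_
  have hlagrange := lagrange_identity w x y
  rw [star_trivial, dotProduct_cauchySchwarzMatrix_mulVec]
  have hsum : 0 ≤ ∑ i, ∑ j, w i * w j * (x i * y j - x j * y i) ^ 2 :=
    Finset.sum_nonneg fun i _ => Finset.sum_nonneg fun j _ =>
      mul_nonneg (mul_nonneg (hw i) (hw j)) (sq_nonneg _)
  linarith

theorem dotProduct_cauchySchwarzMatrix_mulVec_eq_zero_iff {w x : ι → ℝ} (hw : ∀ i, 0 < w i)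
    (hx : x ≠ 0) (y : ι → ℝ) :
    y ⬝ᵥ cauchySchwarzMatrix w x *ᵥ y = 0 ↔ ∃ t : ℝ, y = t • x := by
  have hterm : ∀ i j, 0 ≤ w i * w j * (x i * y j - x j * y i) ^ 2 := fun i j =>
    mul_nonneg (mul_pos (hw i) (hw j)).le (sq_nonneg _)
  rw [exists_eq_smul_iff_forall_mul_eq hx, dotProduct_cauchySchwarzMatrix_mulVec,
    ← mul_eq_zero_iff_left two_ne_zero, lagrange_identity,
    Finset.sum_eq_zero_iff_of_nonneg fun i _ => Finset.sum_nonneg fun j _ => hterm i j]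
  simp only [Finset.mem_univ, forall_const, Finset.sum_eq_zero_iff_of_nonneg fun j _ => hterm _ j,
    mul_eq_zero, (hw _).ne', false_or, pow_eq_zero_iff two_ne_zero, sub_eq_zero]

theorem rank_cauchySchwarzMatrix {w x : ι → ℝ} (hw : ∀ i, 0 < w i) (hx : x ≠ 0) :
    (cauchySchwarzMatrix w x).rank = Fintype.card ι - 1 := by
  have hker : LinearMap.ker (cauchySchwarzMatrix w x).mulVecLin = ℝ ∙ x := by
    ext y
    rw [LinearMap.mem_ker, mulVecLin_apply, Submodule.mem_span_singleton,
      ← (cauchySchwarzMatrix_posSemidef (fun i => (hw i).le) x).dotProduct_mulVec_zero_iff,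
      star_trivial, dotProduct_cauchySchwarzMatrix_mulVec_eq_zero_iff hw hx]
    simp only [eq_comm]
  have := LinearMap.finrank_range_add_finrank_ker (cauchySchwarzMatrix w x).mulVecLin
  rw [hker, finrank_span_singleton hx, Module.finrank_fintype_fun_eq_card] at this
  rw [rank]
  omega

end CauchySchwarzMatrix

section AbsRpow

variable {t : ℝ}

theorem abs_rpow_sub_two_mul_sq (q : ℝ) (ht : t ≠ 0) : |t| ^ (q - 2) * t ^ 2 = |t| ^ q := by
  rw [← sq_abs, ← Real.rpow_natCast, ← Real.rpow_add (abs_pos.2 ht)]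
  norm_num

theorem sign_mul_abs_rpow_sub_one (q : ℝ) (ht : t ≠ 0) :
    Real.sign t * |t| ^ (q - 1) = |t| ^ (q - 2) * t := by
  rw [show q - 1 = q - 2 + 1 by ring, Real.rpow_add_one (abs_ne_zero.2 ht)]
  rcases ht.lt_or_gt with h | h
  · rw [Real.sign_of_neg h, abs_of_neg h]; ring
  · rw [Real.sign_of_pos h, abs_of_pos h]; ring

theorem hasDerivAt_abs_rpow_of_ne_zero (q : ℝ) (ht : t ≠ 0) :
    HasDerivAt (fun s => |s| ^ q) (q * |t| ^ (q - 2) * t) t := by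
  have h := (Real.hasDerivAt_rpow_const (p := q) (Or.inl (abs_ne_zero.2 ht))).comp t
    (hasDerivAt_abs ht)
  rw [show q - 1 = q - 2 + 1 by ring, Real.rpow_add_one (abs_ne_zero.2 ht), mul_assoc,
    mul_assoc, abs_mul_sign, ← mul_assoc] at h
  exact h

theorem hasDerivAt_abs_rpow_mul_self (q : ℝ) (ht : t ≠ 0) :
    HasDerivAt (fun s => |s| ^ q * s) ((q + 1) * |t| ^ q) t := by
  refine ((hasDerivAt_abs_rpow_of_ne_zero q ht).mul (hasDerivAt_id t)).congr_deriv ?_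
  rw [id_eq, mul_one, mul_assoc, mul_assoc, ← sq, abs_rpow_sub_two_mul_sq q ht]
  ring

end AbsRpow

section PNorm

open scoped Matrix

variable {ι : Type*} [Fintype ι] {p : ℝ}

noncomputable def pnorm (p : ℝ) (y : ι → ℝ) : ℝ := (∑ j, |y j| ^ p) ^ (1 / p)

noncomputable def pnormGrad (p : ℝ) (y : ι → ℝ) (j : ι) : ℝ :=
  (∑ k, |y k| ^ p) ^ (1 / p - 1) * (|y j| ^ (p - 2) * y j)

noncomputable def pnormHessian [DecidableEq ι] (p : ℝ) (x : ι → ℝ) : Matrix ι ι ℝ :=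
  ((p - 1) * (∑ k, |x k| ^ p) ^ (1 / p - 2)) • cauchySchwarzMatrix (fun i => |x i| ^ (p - 2)) x

theorem isOpen_setOf_forall_ne_zero : IsOpen {w : ι → ℝ | ∀ j, w j ≠ 0} := by
  simpa only [Set.ofPred_forall] using
    isOpen_iInter_of_finite fun j => isOpen_ne_fun (continuous_apply j) continuous_const

theorem sum_abs_rpow_pos [Nonempty ι] (p : ℝ) {w : ι → ℝ} (hw : ∀ j, w j ≠ 0) :
    0 < ∑ j, |w j| ^ p :=
  Finset.sum_pos (fun j _ => Real.rpow_pos_of_pos (abs_pos.2 (hw j)) p) Finset.univ_nonempty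

theorem sum_abs_rpow_sub_two_mul_sq (p : ℝ) {x : ι → ℝ} (hx : ∀ j, x j ≠ 0) :
    ∑ k, |x k| ^ (p - 2) * x k ^ 2 = ∑ k, |x k| ^ p :=
  Finset.sum_congr rfl fun k _ => abs_rpow_sub_two_mul_sq p (hx k)

theorem contDiffAt_pnorm [Nonempty ι] {w : ι → ℝ} (hw : ∀ j, w j ≠ 0) {n : ℕ∞} :
    ContDiffAt ℝ n (pnorm p) w := by
  have hsum : ContDiffAt ℝ n (fun y : ι → ℝ => ∑ j, |y j| ^ p) w :=
    ContDiffAt.sum fun j _ =>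
      ((contDiff_apply ℝ ℝ j).contDiffAt.abs (hw j)).rpow_const_of_ne (abs_ne_zero.2 (hw j))
  exact hsum.rpow_const_of_ne (sum_abs_rpow_pos p hw).ne'

theorem hasFDerivAt_sum_abs_rpow (p : ℝ) {w : ι → ℝ} (hw : ∀ j, w j ≠ 0) :
    HasFDerivAt (fun y : ι → ℝ => ∑ j, |y j| ^ p)
      (∑ j, (p * |w j| ^ (p - 2) * w j) • ContinuousLinearMap.proj j : (ι → ℝ) →L[ℝ] ℝ) w :=
  HasFDerivAt.fun_sum fun j _ =>
    ((hasDerivAt_abs_rpow_of_ne_zero p (hw j)).comp_hasFDerivAt w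
      (hasFDerivAt_apply (𝕜 := ℝ) j w) :)

theorem hasFDerivAt_pnorm [Nonempty ι] (hp : p ≠ 0) {w : ι → ℝ} (hw : ∀ j, w j ≠ 0) :
    HasFDerivAt (pnorm p)
      (∑ j, pnormGrad p w j • ContinuousLinearMap.proj j : (ι → ℝ) →L[ℝ] ℝ) w := by
  have h := (Real.hasDerivAt_rpow_const (p := 1 / p)
    (Or.inl (sum_abs_rpow_pos p hw).ne')).comp_hasFDerivAt w (hasFDerivAt_sum_abs_rpow p hw)
  refine h.congr_fderiv ?_
  simp only [Finset.smul_sum, smul_smul, pnormGrad]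
  refine Finset.sum_congr rfl fun j _ => ?_
  congr 1
  field_simp

theorem hasFDerivAt_pnormGrad [DecidableEq ι] [Nonempty ι] (hp : p ≠ 0) {x : ι → ℝ}
    (hx : ∀ j, x j ≠ 0) (j : ι) :
    HasFDerivAt (fun w => pnormGrad p w j)
      (∑ i, pnormHessian p x i j • ContinuousLinearMap.proj i : (ι → ℝ) →L[ℝ] ℝ) x := by
  have hS := sum_abs_rpow_pos p hx
  have hpow := (Real.hasDerivAt_rpow_const (p := 1 / p - 1) (Or.inl hS.ne')).comp_hasFDerivAt x
    (hasFDerivAt_sum_abs_rpow p hx)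
  have hcoord := (hasDerivAt_abs_rpow_mul_self (p - 2) (hx j)).comp_hasFDerivAt x
    (hasFDerivAt_apply (𝕜 := ℝ) j x)
  refine (hpow.mul hcoord).congr_fderiv (ContinuousLinearMap.ext fun y => ?_)
  have hcol : (∑ i, pnormHessian p x i j • ContinuousLinearMap.proj i : (ι → ℝ) →L[ℝ] ℝ) y =
      (y ᵥ* pnormHessian p x) j := by
    simp [Matrix.vecMul, dotProduct, mul_comm]
  rw [hcol, pnormHessian, Matrix.vecMul_smul, Pi.smul_apply, vecMul_cauchySchwarzMatrix,
    sum_abs_rpow_sub_two_mul_sq p hx]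
  have hexp :
      (∑ k, |x k| ^ p) ^ (1 / p - 1) = (∑ k, |x k| ^ p) ^ (1 / p - 2) * ∑ k, |x k| ^ p := by
    rw [← Real.rpow_add_one hS.ne']
    ring_nf
  simp only [Function.comp_apply, add_apply, smul_apply, ContinuousLinearMap.proj_apply,
    smul_eq_mul, sum_apply, mul_assoc p, ← Finset.mul_sum]
  rw [show 1 / p - 1 - 1 = 1 / p - 2 by ring, hexp]
  field_simp
  ring

theorem fderiv_fderiv_pnorm_apply [DecidableEq ι] [Nonempty ι] (hp : p ≠ 0) {x : ι → ℝ}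
    (hx : ∀ j, x j ≠ 0) (y z : ι → ℝ) :
    fderiv ℝ (fderiv ℝ (pnorm p)) x y z = y ⬝ᵥ pnormHessian p x *ᵥ z := by
  have hgrad : fderiv ℝ (pnorm p) =ᶠ[nhds x]
      fun w => (∑ j, pnormGrad p w j • ContinuousLinearMap.proj j : (ι → ℝ) →L[ℝ] ℝ) := by
    filter_upwards [isOpen_setOf_forall_ne_zero.mem_nhds hx] with w hw
    exact (hasFDerivAt_pnorm hp hw).fderiv
  have hgrad' := HasFDerivAt.fun_sum (u := Finset.univ) fun j _ =>
    (hasFDerivAt_pnormGrad hp hx j).smul_const (ContinuousLinearMap.proj j : (ι → ℝ) →L[ℝ] ℝ)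
  rw [hgrad.fderiv_eq, hgrad'.fderiv, Matrix.dotProduct_mulVec]
  simp [dotProduct, Matrix.vecMul, mul_comm]

theorem pnormHessian_apply [DecidableEq ι] (p : ℝ) {x : ι → ℝ} (hx : ∀ j, x j ≠ 0) (i j : ι) :
    pnormHessian p x i j =
      (p - 1) * (∑ k, |x k| ^ p) ^ (1 / p - 2) *
        ((∑ k, |x k| ^ p) * (if i = j then |x i| ^ (p - 2) else 0) -
          (Real.sign (x i) * |x i| ^ (p - 1)) * (Real.sign (x j) * |x j| ^ (p - 1))) := by
  simp only [pnormHessian, cauchySchwarzMatrix, sum_abs_rpow_sub_two_mul_sq p hx,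
    sign_mul_abs_rpow_sub_one p (hx i), sign_mul_abs_rpow_sub_one p (hx j), Matrix.smul_apply,
    Matrix.sub_apply, Matrix.diagonal_apply, Matrix.vecMulVec_apply, Pi.mul_apply, smul_eq_mul]

theorem pnormHessian_coeff_pos [Nonempty ι] (hp : 1 < p) {x : ι → ℝ} (hx : ∀ j, x j ≠ 0) :
    0 < (p - 1) * (∑ k, |x k| ^ p) ^ (1 / p - 2) :=
  mul_pos (sub_pos.2 hp) (Real.rpow_pos_of_pos (sum_abs_rpow_pos p hx) _)

theorem pnormHessian_posSemidef [DecidableEq ι] (hp : 1 ≤ p) (x : ι → ℝ) :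
    (pnormHessian p x).PosSemidef :=
  (cauchySchwarzMatrix_posSemidef (fun _ => Real.rpow_nonneg (abs_nonneg _) _) x).smul
    (mul_nonneg (sub_nonneg.2 hp) (Real.rpow_nonneg (Finset.sum_nonneg fun _ _ =>
      Real.rpow_nonneg (abs_nonneg _) _) _))

theorem dotProduct_pnormHessian_mulVec_eq_zero_iff [DecidableEq ι] [Nonempty ι] (hp : 1 < p)
    {x : ι → ℝ} (hx : ∀ j, x j ≠ 0) (y : ι → ℝ) :
    y ⬝ᵥ pnormHessian p x *ᵥ y = 0 ↔ ∃ t : ℝ, y = t • x := by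
  rw [pnormHessian, Matrix.smul_mulVec, dotProduct_smul, smul_eq_mul,
    mul_eq_zero_iff_left (pnormHessian_coeff_pos hp hx).ne']
  exact dotProduct_cauchySchwarzMatrix_mulVec_eq_zero_iff
    (fun i => Real.rpow_pos_of_pos (abs_pos.2 (hx i)) _)
    (Function.ne_iff.2 ⟨Classical.arbitrary ι, hx _⟩) y

theorem rank_pnormHessian [DecidableEq ι] [Nonempty ι] (hp : 1 < p) {x : ι → ℝ}
    (hx : ∀ j, x j ≠ 0) : (pnormHessian p x).rank = Fintype.card ι - 1 := by
  rw [pnormHessian, Matrix.rank_smul_of_mem_nonZeroDivisors _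
    (mem_nonZeroDivisors_of_ne_zero (pnormHessian_coeff_pos hp hx).ne')]
  exact rank_cauchySchwarzMatrix (fun i => Real.rpow_pos_of_pos (abs_pos.2 (hx i)) _)
    (Function.ne_iff.2 ⟨Classical.arbitrary ι, hx _⟩)

end PNorm

/-- **Hessian of the `p`-norm away from the coordinate hyperplanes.**
For `p ∈ (1,∞)` and `x` with all coordinates nonzero, the map `y ↦ ‖y‖_p` is twice continuously
differentiable in a neighborhood of `x`, its Hessian at `x` is the matrix
`H = (p-1)(Σⱼ|xⱼ|^p)^{1/p-2}[(Σⱼ|xⱼ|^p)·diag(|xᵢ|^{p-2}) - v vᵀ]` with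
`vᵢ = sign(xᵢ)|xᵢ|^{p-1}`; moreover `H` is positive semidefinite, `yᵀHy = 0` iff `y` is a
scalar multiple of `x`, and `H` has rank `n-1` when `n ≥ 2`. -/
theorem pnorm_hessian
    (n : ℕ) (hn : 1 ≤ n) (p : ℝ) (hp1 : 1 < p)
    (x : Fin n → ℝ) (hx : ∀ i, x i ≠ 0)
    (f : (Fin n → ℝ) → ℝ) (hf : ∀ y, f y = (∑ j, |y j| ^ p) ^ (1 / p))
    (H : Matrix (Fin n) (Fin n) ℝ)
    (hH : ∀ i j, H i j =
      (p - 1) * (∑ k, |x k| ^ p) ^ (1 / p - 2) *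
        ((∑ k, |x k| ^ p) * (if i = j then |x i| ^ (p - 2) else 0) -
          (Real.sign (x i) * |x i| ^ (p - 1)) * (Real.sign (x j) * |x j| ^ (p - 1)))) :
    (∃ U ∈ nhds x, ContDiffOn ℝ 2 f U) ∧
    (∀ y z : Fin n → ℝ, fderiv ℝ (fun w => fderiv ℝ f w) x y z = ∑ i, ∑ j, y i * H i j * z j) ∧
    H.PosSemidef ∧
    (∀ y : Fin n → ℝ, (∑ i, ∑ j, y i * H i j * y j) = 0 ↔ ∃ t : ℝ, y = t • x) ∧
    (2 ≤ n → H.rank = n - 1) := by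
  have : Nonempty (Fin n) := ⟨⟨0, hn⟩⟩
  obtain rfl : f = pnorm p := funext hf
  obtain rfl : H = pnormHessian p x := Matrix.ext fun i j => by rw [hH, pnormHessian_apply p hx]
  refine ⟨⟨_, isOpen_setOf_forall_ne_zero.mem_nhds hx,
      fun w hw => (contDiffAt_pnorm hw).contDiffWithinAt⟩, fun y z => ?_,
    pnormHessian_posSemidef hp1.le x, fun y => ?_, fun _ => ?_⟩
  · rw [sum_sum_mul_mul_eq_dotProduct_mulVec,
      fderiv_fderiv_pnorm_apply (zero_lt_one.trans hp1).ne' hx]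
  · rw [sum_sum_mul_mul_eq_dotProduct_mulVec, dotProduct_pnormHessian_mulVec_eq_zero_iff hp1 hx]
  · rw [rank_pnormHessian hp1 hx, Fintype.card_fin]
end
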